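/- arXiv:2303.05024 — 7 statements merged into one kernel-verified Lean document; each statement's English description precedes it below -/
import Mathlib

section
/- Identifiability of the DCBM parameterization. Let n ≥ K ≥ 1, let Π ∈ {0,1}^{n×K} be a membership matrix (each row a standard basis vector of ℝ^K) in which every community is nonempty, and let Ω ∈ ℝ^{n×n} be a matrix of the form Ω = ΘΠPΠ′Θ for some positive diagonal Θ and some symmetric K×K matrix P with nonnegative entries, such that all diagonal entries of Ω are positive. Let h ∈ ℝ^K with h_k the fraction of nodes in community k. Then: (existence) there exist a positive diagonal matrix Θ* = diag(θ*) and a symmetric nonnegative K×K matrix P* such that Ω = Θ*ΠP*Π′Θ*, ‖θ*‖₁ = n, and P*h = α 1_K for some α > 0; (uniqueness) if (Θ⁽¹⁾, P⁽¹⁾) and (Θ⁽²⁾, P⁽²⁾) both satisfy Ω = Θ⁽ⁱ⁾ΠP⁽ⁱ⁾Π′Θ⁽ⁱ⁾ with ‖θ⁽ⁱ⁾‖₁ = n and P⁽ⁱ⁾h proportional to 1_K, then Θ⁽¹⁾ = Θ⁽²⁾ and P⁽¹⁾ = P⁽²⁾. -/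
open Finset


lemma dcbm_scaling {K : ℕ} (hK : 1 ≤ K) (P : Fin K → Fin K → ℝ)
    (hsymm : ∀ k l, P k l = P l k) (hnn : ∀ k l, 0 ≤ P k l)
    (hdiag : ∀ k, 0 < P k k) (h : Fin K → ℝ) (hh : ∀ k, 0 < h k) :
    ∃ y : Fin K → ℝ, (∀ k, 0 < y k) ∧ ∀ k, y k * ∑ l, P k l * y l = h k := by
  set R : Fin K → ℝ := fun k => Real.sqrt (h k / P k k) with hRdef
  have hR : ∀ k, 0 < R k := fun k => Real.sqrt_pos.mpr (div_pos (hh k) (hdiag k))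
  have hRsq : ∀ k, P k k * R k ^ 2 = h k := by
    intro k
    rw [hRdef, Real.sq_sqrt (le_of_lt (div_pos (hh k) (hdiag k)))]
    exact mul_div_cancel₀ _ (hdiag k).ne'
  set S : Fin K → ℝ := fun k => ∑ l, P k l * R l with hSdef
  have hPR_le : ∀ k, P k k * R k ≤ S k := by
    intro k
    exact Finset.single_le_sum (f := fun l => P k l * R l)
      (fun l _ => mul_nonneg (hnn k l) (hR l).le) (mem_univ k)
  have hS : ∀ k, 0 < S k := fun k =>
    lt_of_lt_of_le (mul_pos (hdiag k) (hR k)) (hPR_le k)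
  set ε : Fin K → ℝ := fun k => h k / S k with hεdef
  have hε : ∀ k, 0 < ε k := fun k => div_pos (hh k) (hS k)
  have hεR : ∀ k, ε k ≤ R k := by
    intro k
    rw [hεdef]
    rw [div_le_iff₀ (hS k)]
    calc h k = (P k k * R k) * R k := by rw [← hRsq k]; ring
      _ ≤ S k * R k := mul_le_mul_of_nonneg_right (hPR_le k) (hR k).le
      _ = R k * S k := mul_comm _ _
  -- the functional
  set F : (Fin K → ℝ) → ℝ :=
    fun y => (∑ k, ∑ l, P k l * y k * y l) - ∑ k, 2 * h k * Real.log (y k) with hFdef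
  have hεleR : ε ≤ R := fun k => hεR k
  have hne : (Set.Icc ε R).Nonempty := ⟨ε, Set.left_mem_Icc.mpr hεleR⟩
  have hcont : ContinuousOn F (Set.Icc ε R) := by
    apply ContinuousOn.sub
    · exact (continuous_finset_sum _ fun k _ => continuous_finset_sum _ fun l _ =>
        (continuous_const.mul (continuous_apply k)).mul (continuous_apply l)).continuousOn
    · apply continuousOn_finset_sum
      intro k _
      apply ContinuousOn.mul continuousOn_const
      apply Real.continuousOn_log.comp (continuous_apply k).continuousOn
      intro y hy
      exact ne_of_gt (lt_of_lt_of_le (hε k) (hy.1 k))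
  obtain ⟨y, hyB, hymin⟩ := (isCompact_Icc : IsCompact (Set.Icc ε R)).exists_isMinOn hne hcont
  have hyε : ∀ k, ε k ≤ y k := fun k => hyB.1 k
  have hyR : ∀ k, y k ≤ R k := fun k => hyB.2 k
  have hypos : ∀ k, 0 < y k := fun k => lt_of_lt_of_le (hε k) (hyε k)
  -- expansion of quadratic form around coordinate k
  have expand : ∀ (k : Fin K) (z : Fin K → ℝ),
      (∑ k', ∑ l, P k' l * z k' * z l) =
      P k k * z k * z k + 2 * ((∑ l ∈ univ.erase k, P k l * z l) * z k)
        + ∑ k' ∈ univ.erase k, ∑ l ∈ univ.erase k, P k' l * z k' * z l := by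
    intro k z
    have h1 : (∑ k', ∑ l, P k' l * z k' * z l)
        = ∑ k', ((∑ l ∈ univ.erase k, P k' l * z k' * z l) + P k' k * z k' * z k) :=
      Finset.sum_congr rfl fun k' _ => (Finset.sum_erase_add _ _ (mem_univ k)).symm
    rw [h1, Finset.sum_add_distrib, ← Finset.sum_erase_add _ _ (mem_univ k),
        ← Finset.sum_erase_add _ (fun k' => P k' k * z k' * z k) (mem_univ k)]
    have h2 : ∑ k' ∈ univ.erase k, P k' k * z k' * z k
        = (∑ l ∈ univ.erase k, P k l * z l) * z k := by
      rw [Finset.sum_mul]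
      exact Finset.sum_congr rfl fun l _ => by rw [hsymm]
    have h3 : ∑ l ∈ univ.erase k, P k l * z k * z l
        = (∑ l ∈ univ.erase k, P k l * z l) * z k := by
      rw [Finset.sum_mul]; exact Finset.sum_congr rfl fun l _ => by ring
    rw [h2, h3]; ring
  refine ⟨y, hypos, ?_⟩
  intro k
  set b : ℝ := ∑ l ∈ univ.erase k, P k l * y l with hbdef
  have hb : 0 ≤ b :=
    Finset.sum_nonneg fun l _ => mul_nonneg (hnn k l) (hypos l).le
  have hbR : b ≤ ∑ l ∈ univ.erase k, P k l * R l :=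
    Finset.sum_le_sum fun l _ => mul_le_mul_of_nonneg_left (hyR l) (hnn k l)
  set D : ℝ := Real.sqrt (b ^ 2 + 4 * P k k * h k) with hDdef
  have hD2 : D ^ 2 = b ^ 2 + 4 * P k k * h k := by
    rw [hDdef, Real.sq_sqrt]
    nlinarith [sq_nonneg b, mul_pos (hdiag k) (hh k)]
  have hbD : b < D := by
    rw [hDdef]
    apply Real.lt_sqrt_of_sq_lt
    nlinarith [hdiag k, hh k]
  set t₀ : ℝ := (D - b) / (2 * P k k) with ht₀def
  have ht₀ : 0 < t₀ := div_pos (by linarith) (by linarith [hdiag k])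
  have hPk2 : (2 * P k k) ≠ 0 := ne_of_gt (by linarith [hdiag k])
  have ht : t₀ * (2 * P k k) = D - b := by
    rw [ht₀def]; exact div_mul_cancel₀ _ hPk2
  have heq : P k k * t₀ ^ 2 + b * t₀ = h k := by
    have h5 : 4 * P k k * (P k k * t₀ ^ 2 + b * t₀) = 4 * P k k * h k := by
      have h4 : (t₀ * (2 * P k k)) ^ 2 = (D - b) ^ 2 := by rw [ht]
      linear_combination h4 + hD2 + (2 * b) * ht
    exact mul_left_cancel₀ (ne_of_gt (by linarith [hdiag k] : (0:ℝ) < 4 * P k k)) h5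
  -- bounds on t₀
  have ht₀R : t₀ ≤ R k := by
    rw [hRdef]
    apply Real.le_sqrt_of_sq_le
    rw [le_div_iff₀ (hdiag k)]
    nlinarith [mul_nonneg hb ht₀.le]
  have ht₀ε : ε k ≤ t₀ := by
    rw [hεdef, div_le_iff₀ (hS k)]
    have hSk : P k k * t₀ + b ≤ S k := by
      have : S k = (∑ l ∈ univ.erase k, P k l * R l) + P k k * R k :=
        (Finset.sum_erase_add _ _ (mem_univ k)).symm
      rw [this]
      have := mul_le_mul_of_nonneg_left ht₀R (hdiag k).le
      linarith
    calc h k = t₀ * (P k k * t₀ + b) := by rw [← heq]; ring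
      _ ≤ t₀ * S k := mul_le_mul_of_nonneg_left hSk ht₀.le
  -- the updated point
  set y' : Fin K → ℝ := Function.update y k t₀ with hy'def
  have hy'B : y' ∈ Set.Icc ε R := by
    constructor
    · intro l
      by_cases hl : l = k
      · subst hl; simpa [hy'def] using ht₀ε
      · simpa [hy'def, Function.update_of_ne hl] using hyε l
    · intro l
      by_cases hl : l = k
      · subst hl; simpa [hy'def] using ht₀R
      · simpa [hy'def, Function.update_of_ne hl] using hyR l
  have hFle : F y ≤ F y' := hymin hy'B
  -- invariance of off-k parts
  have hub : (∑ l ∈ univ.erase k, P k l * y' l) = b := by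
    rw [hbdef]
    exact Finset.sum_congr rfl fun l hl =>
      by rw [hy'def, Function.update_of_ne (Finset.ne_of_mem_erase hl)]
  have huC : (∑ k' ∈ univ.erase k, ∑ l ∈ univ.erase k, P k' l * y' k' * y' l)
      = ∑ k' ∈ univ.erase k, ∑ l ∈ univ.erase k, P k' l * y k' * y l := by
    refine Finset.sum_congr rfl fun k' hk' => Finset.sum_congr rfl fun l hl => ?_
    rw [hy'def, Function.update_of_ne (Finset.ne_of_mem_erase hk'),
      Function.update_of_ne (Finset.ne_of_mem_erase hl)]
  have hulog : (∑ k' ∈ univ.erase k, 2 * h k' * Real.log (y' k'))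
      = ∑ k' ∈ univ.erase k, 2 * h k' * Real.log (y k') := by
    refine Finset.sum_congr rfl fun k' hk' => ?_
    rw [hy'def, Function.update_of_ne (Finset.ne_of_mem_erase hk')]
  have hlogsplit : ∀ z : Fin K → ℝ, (∑ k', 2 * h k' * Real.log (z k'))
      = (∑ k' ∈ univ.erase k, 2 * h k' * Real.log (z k')) + 2 * h k * Real.log (z k) :=
    fun z => (Finset.sum_erase_add _ _ (mem_univ k)).symm
  have hy'k : y' k = t₀ := by rw [hy'def, Function.update_self]
  have hφ : P k k * y k * y k + 2 * (b * y k) - 2 * h k * Real.log (y k)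
      ≤ P k k * t₀ * t₀ + 2 * (b * t₀) - 2 * h k * Real.log t₀ := by
    have h1 := hFle
    rw [hFdef] at h1
    simp only at h1
    rw [expand k y, expand k y', hlogsplit y, hlogsplit y', hub, huC, hulog, hy'k] at h1
    linarith
  have hlog' : t₀ * (Real.log (y k) - Real.log t₀) ≤ y k - t₀ := by
    have h1 : Real.log (y k / t₀) ≤ y k / t₀ - 1 :=
      Real.log_le_sub_one_of_pos (div_pos (hypos k) ht₀)
    rw [Real.log_div (ne_of_gt (hypos k)) (ne_of_gt ht₀)] at h1
    have h2 := mul_le_mul_of_nonneg_left h1 ht₀.le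
    calc t₀ * (Real.log (y k) - Real.log t₀) ≤ t₀ * (y k / t₀ - 1) := h2
      _ = y k - t₀ := by field_simp
  have hsq : t₀ * (P k k * (y k - t₀) ^ 2) ≤ 0 := by
    have A := mul_le_mul_of_nonneg_left hφ ht₀.le
    have B := mul_le_mul_of_nonneg_left hlog' (by linarith [hh k] : (0:ℝ) ≤ 2 * h k)
    have C : 2 * h k * (y k - t₀) = (2 * P k k * t₀ ^ 2 + 2 * b * t₀) * (y k - t₀) := by
      linear_combination (-2 * (y k - t₀)) * heq
    nlinarith [A, B, C]
  have hyk : y k = t₀ := by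
    have h2 : (y k - t₀) ^ 2 ≤ 0 := by
      by_contra hc
      push_neg at hc
      exact absurd hsq (not_le.mpr (mul_pos ht₀ (mul_pos (hdiag k) hc)))
    have h3 : y k - t₀ = 0 :=
      pow_eq_zero_iff two_ne_zero |>.mp (le_antisymm h2 (sq_nonneg _))
    linarith
  have hsum : (∑ l, P k l * y l) = b + P k k * y k :=
    by rw [hbdef, ← Finset.sum_erase_add _ _ (mem_univ k)]
  rw [hsum, hyk]
  linear_combination heq

/-- Identifiability of the DCBM parameterization: any DCBM probability
matrix `Ω = ΘΠPΠ'Θ` with positive diagonal admits a representation with `‖θ‖₁ = n` and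
`Ph ∝ 1_K`, and this representation is unique. -/
theorem dcbm_identifiability
    (n K : ℕ) (hK : 1 ≤ K) (hKn : K ≤ n)
    (π : Fin n → Fin K) (hπ : Function.Surjective π)
    (θ : Fin n → ℝ) (hθ : ∀ i, 0 < θ i)
    (P : Fin K → Fin K → ℝ)
    (hPsymm : ∀ k l, P k l = P l k) (hPnn : ∀ k l, 0 ≤ P k l)
    (Ω : Fin n → Fin n → ℝ)
    (hΩ : ∀ i j, Ω i j = θ i * θ j * P (π i) (π j))
    (hdiag : ∀ i, 0 < Ω i i) :
    -- existence of a calibrated representation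
    (∃ (θ' : Fin n → ℝ) (P' : Fin K → Fin K → ℝ),
      (∀ i, 0 < θ' i) ∧ (∀ k l, P' k l = P' l k) ∧ (∀ k l, 0 ≤ P' k l) ∧
      (∀ i j, Ω i j = θ' i * θ' j * P' (π i) (π j)) ∧
      (∑ i, θ' i = (n : ℝ)) ∧
      (∃ α : ℝ, 0 < α ∧ ∀ k, ∑ l,
        P' k l * (((univ.filter fun i => π i = l).card : ℝ) / n) = α)) ∧
    -- uniqueness of the calibrated representation
    (∀ (θ₁ θ₂ : Fin n → ℝ) (P₁ P₂ : Fin K → Fin K → ℝ),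
      (∀ i, 0 < θ₁ i) → (∀ k l, P₁ k l = P₁ l k) → (∀ k l, 0 ≤ P₁ k l) →
      (∀ i j, Ω i j = θ₁ i * θ₁ j * P₁ (π i) (π j)) →
      (∑ i, θ₁ i = (n : ℝ)) →
      (∃ α : ℝ, ∀ k, ∑ l, P₁ k l * (((univ.filter fun i => π i = l).card : ℝ) / n) = α) →
      (∀ i, 0 < θ₂ i) → (∀ k l, P₂ k l = P₂ l k) → (∀ k l, 0 ≤ P₂ k l) →
      (∀ i j, Ω i j = θ₂ i * θ₂ j * P₂ (π i) (π j)) →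
      (∑ i, θ₂ i = (n : ℝ)) →
      (∃ α : ℝ, ∀ k, ∑ l, P₂ k l * (((univ.filter fun i => π i = l).card : ℝ) / n) = α) →
      θ₁ = θ₂ ∧ P₁ = P₂) := by
  have hn : 0 < n := lt_of_lt_of_le hK hKn
  have hnR : (0:ℝ) < n := by exact_mod_cast hn
  haveI : Nonempty (Fin n) := ⟨⟨0, hn⟩⟩
  haveI : Nonempty (Fin K) := ⟨⟨0, hK⟩⟩
  set h' : Fin K → ℝ := fun l => (((univ.filter fun i => π i = l).card : ℝ) / n) with hh'def
  have hh' : ∀ l, 0 < h' l := by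
    intro l
    apply div_pos _ hnR
    have : (univ.filter fun i => π i = l).Nonempty := by
      obtain ⟨i, hi⟩ := hπ l
      exact ⟨i, by simp [hi]⟩
    exact_mod_cast Finset.card_pos.mpr this
  constructor
  · -- existence
    have hPd : ∀ k, 0 < P k k := by
      intro k
      obtain ⟨i, hi⟩ := hπ k
      have h1 := hdiag i
      rw [hΩ i i, hi] at h1
      nlinarith [hθ i]
    obtain ⟨y, hy, hyeq⟩ := dcbm_scaling hK P hPsymm hPnn hPd h' hh'
    set c : Fin K → ℝ := fun k => h' k / y k with hcdef
    have hc : ∀ k, 0 < c k := fun k => div_pos (hh' k) (hy k)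
    have hcy : ∀ k, c k * y k = h' k := fun k => div_mul_cancel₀ _ (hy k).ne'
    have hsumpos : 0 < ∑ i, θ i * c (π i) :=
      Finset.sum_pos (fun i _ => mul_pos (hθ i) (hc (π i))) univ_nonempty
    set β : ℝ := n / (∑ i, θ i * c (π i)) with hβdef
    have hβ : 0 < β := div_pos hnR hsumpos
    have hSy : ∀ k, (∑ l, P k l * y l) = c k := by
      intro k
      have h2 : y k ≠ 0 := (hy k).ne'
      have h3 : c k = h' k / y k := rfl
      rw [h3, eq_div_iff h2]
      linear_combination hyeq k
    refine ⟨fun i => β * (θ i * c (π i)), fun k l => P k l / (β ^ 2 * c k * c l),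
      fun i => mul_pos hβ (mul_pos (hθ i) (hc (π i))), ?_, ?_, ?_, ?_, ?_⟩
    · intro k l
      show P k l / (β ^ 2 * c k * c l) = P l k / (β ^ 2 * c l * c k)
      rw [hPsymm k l]
      ring
    · intro k l
      exact div_nonneg (hPnn k l)
        (mul_pos (mul_pos (pow_pos hβ 2) (hc k)) (hc l)).le
    · intro i j
      show Ω i j = (β * (θ i * c (π i))) * (β * (θ j * c (π j)))
        * (P (π i) (π j) / (β ^ 2 * c (π i) * c (π j)))
      rw [hΩ i j]
      have h1 : (β ^ 2 * c (π i) * c (π j)) ≠ 0 :=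
        ne_of_gt (mul_pos (mul_pos (pow_pos hβ 2) (hc _)) (hc _))
      field_simp
      field_simp [(hc (π i)).ne', (hc (π j)).ne']
    · show (∑ i, β * (θ i * c (π i))) = (n : ℝ)
      rw [← Finset.mul_sum, hβdef]
      exact div_mul_cancel₀ _ (ne_of_gt hsumpos)
    · refine ⟨(β ^ 2)⁻¹, inv_pos.mpr (pow_pos hβ 2), ?_⟩
      intro k
      have hb2 : (β ^ 2 * c k) ≠ 0 := ne_of_gt (mul_pos (pow_pos hβ 2) (hc k))
      show (∑ l, P k l / (β ^ 2 * c k * c l) * h' l) = (β ^ 2)⁻¹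
      calc (∑ l, P k l / (β ^ 2 * c k * c l) * h' l)
          = ∑ l, (β ^ 2 * c k)⁻¹ * (P k l * y l) := by
            refine Finset.sum_congr rfl fun l _ => ?_
            rw [← hcy l]
            have h2 : c l ≠ 0 := (hc l).ne'
            field_simp
        _ = (β ^ 2 * c k)⁻¹ * ∑ l, P k l * y l := (Finset.mul_sum _ _ _).symm
        _ = (β ^ 2)⁻¹ := by
            rw [hSy k, mul_inv, mul_assoc, inv_mul_cancel₀ (hc k).ne', mul_one]
  · -- uniqueness
    intro θ₁ θ₂ P₁ P₂ hθ₁ hP₁s hP₁n hΩ₁ hsum₁ hα₁e hθ₂ hP₂s hP₂n hΩ₂ hsum₂ hα₂e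
    obtain ⟨α₁, hα₁'⟩ := hα₁e
    obtain ⟨α₂, hα₂'⟩ := hα₂e
    have hα₁ : ∀ k, (∑ l, P₁ k l * h' l) = α₁ := hα₁'
    have hα₂ : ∀ k, (∑ l, P₂ k l * h' l) = α₂ := hα₂'
    -- diagonal entries of P₁, P₂ are positive
    have hP₁d : ∀ k, 0 < P₁ k k := by
      intro k
      obtain ⟨i, hi⟩ := hπ k
      have h1 := hdiag i
      rw [hΩ₁ i i, hi] at h1
      nlinarith [hθ₁ i]
    have hP₂d : ∀ k, 0 < P₂ k k := by
      intro k
      obtain ⟨i, hi⟩ := hπ k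
      have h1 := hdiag i
      rw [hΩ₂ i i, hi] at h1
      nlinarith [hθ₂ i]
    -- the ratio θ₂/θ₁ is constant on communities
    have hre : ∀ i, θ₂ i * θ₂ i * P₂ (π i) (π i) = θ₁ i * θ₁ i * P₁ (π i) (π i) :=
      fun i => (hΩ₂ i i).symm.trans (hΩ₁ i i)
    have hreq : ∀ i j, π i = π j → θ₂ i * θ₁ j = θ₂ j * θ₁ i := by
      intro i j hij
      have ei := hre i
      have ej := hre j
      rw [hij] at ei
      have h2 : (θ₂ i * θ₁ j) ^ 2 = (θ₂ j * θ₁ i) ^ 2 := by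
        have hP := (hP₂d (π j)).ne'
        have e3 : (θ₂ i * θ₁ j) ^ 2 * P₂ (π j) (π j) = (θ₂ j * θ₁ i) ^ 2 * P₂ (π j) (π j) := by
          have := hP₁d (π j)
          nlinarith [ei, ej]
        exact mul_right_cancel₀ hP e3
      have h3 : (θ₂ i * θ₁ j - θ₂ j * θ₁ i) * (θ₂ i * θ₁ j + θ₂ j * θ₁ i) = 0 := by
        linear_combination h2
      rcases mul_eq_zero.mp h3 with h4 | h4
      · linarith
      · nlinarith [mul_pos (hθ₂ i) (hθ₁ j), mul_pos (hθ₂ j) (hθ₁ i)]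
    set c : Fin K → ℝ := fun k => θ₂ (Function.surjInv hπ k) / θ₁ (Function.surjInv hπ k)
      with hcdef
    have hc : ∀ k, 0 < c k := fun k => div_pos (hθ₂ _) (hθ₁ _)
    have hθc : ∀ i, θ₂ i = θ₁ i * c (π i) := by
      intro i
      have hj : π (Function.surjInv hπ (π i)) = π i := Function.surjInv_eq hπ (π i)
      have h1 := hreq i (Function.surjInv hπ (π i)) hj.symm
      have h2 : θ₁ (Function.surjInv hπ (π i)) ≠ 0 := (hθ₁ _).ne'
      have h3 : c (π i) = θ₂ (Function.surjInv hπ (π i)) / θ₁ (Function.surjInv hπ (π i)) := rfl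
      rw [h3, ← mul_div_assoc, eq_div_iff h2]
      linear_combination h1
    have hPc : ∀ k l, P₁ k l = c k * c l * P₂ k l := by
      intro k l
      set i := Function.surjInv hπ k with hidef
      set j := Function.surjInv hπ l with hjdef
      have hi : π i = k := Function.surjInv_eq hπ k
      have hj : π j = l := Function.surjInv_eq hπ l
      have h1 : θ₁ i * θ₁ j * P₁ k l = θ₂ i * θ₂ j * P₂ k l := by
        have := (hΩ₁ i j).symm.trans (hΩ₂ i j)
        rwa [hi, hj] at this
      rw [hθc i, hθc j, hi, hj] at h1
      have h2 : θ₁ i * θ₁ j ≠ 0 := ne_of_gt (mul_pos (hθ₁ i) (hθ₁ j))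
      apply mul_left_cancel₀ h2
      linear_combination h1
    -- the calibration equations
    have key2 : ∀ k, (∑ l, P₁ k l * h' l * (c l)⁻¹) = α₂ * c k := by
      intro k
      have h1 : (∑ l, P₂ k l * h' l) = α₂ := hα₂ k
      calc (∑ l, P₁ k l * h' l * (c l)⁻¹)
          = ∑ l, c k * (P₂ k l * h' l) := by
            refine Finset.sum_congr rfl fun l _ => ?_
            rw [hPc k l]
            have h2 : c l ≠ 0 := (hc l).ne'
            field_simp
        _ = c k * α₂ := by rw [← Finset.mul_sum, h1]
        _ = α₂ * c k := mul_comm _ _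
    obtain ⟨kM, -, hkM⟩ := Finset.exists_max_image univ c univ_nonempty
    obtain ⟨km, -, hkm⟩ := Finset.exists_min_image univ c univ_nonempty
    have hms : c km ≤ c kM := hkM km (mem_univ km)
    -- inequality 1 : α₂ * c kM * c km ≤ α₁
    have hineq1 : α₂ * c kM * c km ≤ α₁ := by
      have h1 : (∑ l, P₁ kM l * h' l * (c l)⁻¹) ≤ ∑ l, P₁ kM l * h' l * (c km)⁻¹ := by
        refine Finset.sum_le_sum fun l _ => ?_
        refine mul_le_mul_of_nonneg_left ?_ (mul_nonneg (hP₁n kM l) (hh' l).le)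
        exact inv_anti₀ (hc km) (hkm l (mem_univ l))
      rw [key2 kM] at h1
      have h2 : (∑ l, P₁ kM l * h' l * (c km)⁻¹) = α₁ * (c km)⁻¹ := by
        rw [← Finset.sum_mul, hα₁ kM]
      rw [h2] at h1
      have h3 := mul_le_mul_of_nonneg_right h1 (hc km).le
      calc α₂ * c kM * c km = α₂ * c kM * c km := rfl
        _ ≤ α₁ * (c km)⁻¹ * c km := h3
        _ = α₁ := by rw [mul_assoc, inv_mul_cancel₀ (hc km).ne', mul_one]
    -- inequality 2 : α₁ ≤ α₂ * c km * c kM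
    have hineq2 : α₁ ≤ α₂ * c km * c kM := by
      have h1 : (∑ l, P₁ km l * h' l * (c kM)⁻¹) ≤ ∑ l, P₁ km l * h' l * (c l)⁻¹ := by
        refine Finset.sum_le_sum fun l _ => ?_
        refine mul_le_mul_of_nonneg_left ?_ (mul_nonneg (hP₁n km l) (hh' l).le)
        exact inv_anti₀ (hc l) (hkM l (mem_univ l))
      rw [key2 km] at h1
      have h2 : (∑ l, P₁ km l * h' l * (c kM)⁻¹) = α₁ * (c kM)⁻¹ := by
        rw [← Finset.sum_mul, hα₁ km]
      rw [h2] at h1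
      have h3 := mul_le_mul_of_nonneg_right h1 (hc kM).le
      calc α₁ = α₁ * (c kM)⁻¹ * c kM := by
            rw [mul_assoc, inv_mul_cancel₀ (hc kM).ne', mul_one]
        _ ≤ α₂ * c km * c kM := h3
    -- so c is constant
    have hceq : c kM = c km := by
      by_contra hne'
      have hlt : c km < c kM := lt_of_le_of_ne hms (Ne.symm hne')
      have hstrict : (∑ l, P₁ kM l * h' l * (c l)⁻¹) < ∑ l, P₁ kM l * h' l * (c km)⁻¹ := by
        refine Finset.sum_lt_sum (fun l _ => ?_) ⟨kM, mem_univ kM, ?_⟩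
        · refine mul_le_mul_of_nonneg_left ?_ (mul_nonneg (hP₁n kM l) (hh' l).le)
          exact inv_anti₀ (hc km) (hkm l (mem_univ l))
        · refine mul_lt_mul_of_pos_left ?_ (mul_pos (hP₁d kM) (hh' kM))
          exact inv_strictAnti₀ (hc km) hlt
      rw [key2 kM] at hstrict
      have h2 : (∑ l, P₁ kM l * h' l * (c km)⁻¹) = α₁ * (c km)⁻¹ := by
        rw [← Finset.sum_mul, hα₁ kM]
      rw [h2] at hstrict
      have h3 := mul_lt_mul_of_pos_right hstrict (hc km)
      have h4 : α₁ * (c km)⁻¹ * c km = α₁ := by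
        rw [mul_assoc, inv_mul_cancel₀ (hc km).ne', mul_one]
      rw [h4] at h3
      linarith [hineq2]
    have hcconst : ∀ k, c k = c km := fun k =>
      le_antisymm (hceq ▸ hkM k (mem_univ k)) (hkm k (mem_univ k))
    -- normalization forces c = 1
    have hsum : (∑ i, θ₁ i * c (π i)) = (n : ℝ) := by
      rw [← hsum₂]
      exact (Finset.sum_congr rfl fun i _ => (hθc i).symm)
    have hsum' : (∑ i, θ₁ i * c (π i)) = c km * ∑ i, θ₁ i := by
      rw [Finset.mul_sum]
      exact Finset.sum_congr rfl fun i _ => by rw [hcconst (π i)]; ring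
    have hc1 : c km = 1 := by
      rw [hsum', hsum₁] at hsum
      have h5 : c km * (n : ℝ) = 1 * (n : ℝ) := by linarith
      exact mul_right_cancel₀ (ne_of_gt hnR) h5
    have hcall : ∀ k, c k = 1 := fun k => (hcconst k).trans hc1
    constructor
    · funext i
      rw [hθc i, hcall (π i), mul_one]
    · funext k l
      rw [hPc k l, hcall k, hcall l]
      ring
end

section
/- Rank, trace, and K = 2 eigenvalue of the centered Bernoulli probability matrix. Let Ω = ΘΠPΠ′Θ be a DCBM matrix with θ positive, every community nonempty, and P ∈ ℝ^{K×K} symmetric and invertible with nonnegative entries; let d = ‖θ‖₁^{-1}Π′Θ1_n and g = ‖θ‖₂^{-2}Π′Θ²Π1_K (so g_k = ‖θ‖₂^{-2}Σ_{i∈C_k}θ_i²), and assume d′Pd ≠ 0. Define Ω̃ = Ω − (1_n′Ω1_n)^{-1}Ω1_n1_n′Ω. Then: (i) Ω̃ = ΘΠP̃Π′Θ where P̃ = P − (d′Pd)^{-1}Pdd′P; (ii) rank(Ω̃) = K − 1; (iii) trace(Ω̃) = ‖θ‖₂² · Σ_k P̃_{kk} g_k; and (iv) when K = 2 with P = [[a,b],[b,c]]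 and d = (d₁,d₀)′, g = (g₁,g₀)′, the unique nonzero eigenvalue of Ω̃ is λ̃₁ = trace(Ω̃) = ‖θ‖₂²(ac − b²)(d₀²g₁ + d₁²g₀)/(a d₁² + 2b d₀d₁ + c d₀²). -/
open Finset

lemma rank_mul_of_inj {m k o : Type} [Fintype m] [Fintype k] [Fintype o]
    (A : Matrix m k ℝ) (B : Matrix k o ℝ) (h : Function.Injective A.mulVecLin) :
    (A * B).rank = B.rank := by
  rw [Matrix.rank, Matrix.rank, Matrix.mulVecLin_mul, LinearMap.range_comp]
  exact ((Submodule.equivMapOfInjective _ h _).symm.finrank_eq)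


/-- The centered Bernoulli probability matrix `Ω̃ = Ω - (1ₙ'Ω1ₙ)⁻¹ Ω1ₙ1ₙ'Ω`. -/
noncomputable def centered {n : ℕ} (M : Fin n → Fin n → ℝ) : Fin n → Fin n → ℝ :=
  fun i j => M i j - (∑ k, ∑ l, M k l)⁻¹ * (∑ k, M i k) * (∑ l, M j l)
/-- `x` is an eigenvalue of the square matrix `M`. -/
def IsEigen {ι : Type} [Fintype ι] (M : ι → ι → ℝ) (x : ℝ) : Prop :=
  ∃ v : ι → ℝ, v ≠ 0 ∧ ∀ i, ∑ j, M i j * v j = x * v i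

/-- Rank, trace, and (for `K = 2`) the eigenvalue of the centered
Bernoulli probability matrix `Ω̃ = Ω - (1ₙ'Ω1ₙ)⁻¹Ω1ₙ1ₙ'Ω`. -/
theorem centered_matrix_rank_trace
    (n K : ℕ)
    (π : Fin n → Fin K) (hπ : Function.Surjective π)
    (θ : Fin n → ℝ) (hθ : ∀ i, 0 < θ i)
    (P : Fin K → Fin K → ℝ)
    (hPsymm : ∀ k l, P k l = P l k) (hPnn : ∀ k l, 0 ≤ P k l)
    (hPdet : (Matrix.of P).det ≠ 0)
    (Ω : Fin n → Fin n → ℝ)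
    (hΩ : ∀ i j, Ω i j = θ i * θ j * P (π i) (π j))
    (d g : Fin K → ℝ)
    (hd : ∀ k, d k = (∑ i, θ i)⁻¹ * ∑ i ∈ univ.filter (fun i => π i = k), θ i)
    (hg : ∀ k, g k = (∑ i, (θ i) ^ 2)⁻¹ * ∑ i ∈ univ.filter (fun i => π i = k), (θ i) ^ 2)
    (hdPd : (∑ k, ∑ l, d k * P k l * d l) ≠ 0)
    (Pt : Fin K → Fin K → ℝ)
    (hPt : ∀ k l, Pt k l = P k l -
      (∑ k', ∑ l', d k' * P k' l' * d l')⁻¹ * (∑ m, P k m * d m) * (∑ m, P l m * d m)) :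
    -- (i) `Ω̃ = ΘΠP̃Π'Θ`
    (∀ i j, centered Ω i j = θ i * θ j * Pt (π i) (π j)) ∧
    -- (ii) `rank(Ω̃) = K - 1`
    (Matrix.of (centered Ω)).rank = K - 1 ∧
    -- (iii) `trace(Ω̃) = ‖θ‖₂² ∑ₖ P̃ₖₖ gₖ`
    (∑ i, centered Ω i i) = (∑ i, (θ i) ^ 2) * ∑ k, Pt k k * g k ∧
    -- (iv) the `K = 2` eigenvalue formula, writing `a = P k₀ k₀`, `c = P k₁ k₁`,
    -- `b = P k₀ k₁`, `d₁ = d k₀`, `d₀ = d k₁`, `g₁ = g k₀`, `g₀ = g k₁`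
    (K = 2 → ∀ k₀ k₁ : Fin K, k₀ ≠ k₁ →
      ((∑ i, centered Ω i i) =
        (∑ i, (θ i) ^ 2) * ((P k₀ k₀ * P k₁ k₁ - (P k₀ k₁) ^ 2) *
            ((d k₁) ^ 2 * g k₀ + (d k₀) ^ 2 * g k₁)) /
          (P k₀ k₀ * (d k₀) ^ 2 + 2 * P k₀ k₁ * d k₀ * d k₁ + P k₁ k₁ * (d k₁) ^ 2) ∧
        ∀ x : ℝ, x ≠ 0 →
          (IsEigen (centered Ω) x ↔ x = ∑ i, centered Ω i i))) := by
  classical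
  -- K positive
  rcases Nat.eq_zero_or_pos K with hK0 | hK0
  · subst hK0; simp at hdPd
  have hKne : Nonempty (Fin K) := ⟨⟨0, hK0⟩⟩
  have hnne : Nonempty (Fin n) := by
    obtain ⟨i, _⟩ := hπ (Classical.arbitrary (Fin K)); exact ⟨i⟩
  set S1 := ∑ i, θ i with hS1def
  set S2 := ∑ i, (θ i) ^ 2 with hS2def
  have hS1 : 0 < S1 := Finset.sum_pos (fun i _ => hθ i) ⟨Classical.arbitrary _, mem_univ _⟩
  have hS2 : 0 < S2 := Finset.sum_pos (fun i _ => pow_pos (hθ i) 2) ⟨Classical.arbitrary _, mem_univ _⟩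
  set D := ∑ k, ∑ l, d k * P k l * d l with hD
  -- fiberwise sums
  have hfib : ∀ (w : Fin n → ℝ) (f : Fin K → ℝ),
      ∑ i, w i * f (π i) = ∑ k, (∑ i ∈ univ.filter (fun i => π i = k), w i) * f k := by
    intro w f
    rw [← Finset.sum_fiberwise_of_maps_to (fun i _ => Finset.mem_univ (π i))
        (fun i => w i * f (π i))]
    refine Finset.sum_congr rfl fun k _ => ?_
    rw [Finset.sum_mul]
    exact Finset.sum_congr rfl fun i hi => by rw [(Finset.mem_filter.1 hi).2]
  have hdpos : ∀ k, 0 < d k := by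
    intro k
    obtain ⟨i, hi⟩ := hπ k
    rw [hd k]
    refine mul_pos (inv_pos.2 hS1) (Finset.sum_pos (fun i _ => hθ i) ⟨i, ?_⟩)
    simp [hi]
  -- fiber θ sums in terms of d
  have hfibd : ∀ k, (∑ i ∈ univ.filter (fun i => π i = k), θ i) = S1 * d k := by
    intro k; rw [hd k]; field_simp
  -- row sums
  have hrow : ∀ i, (∑ j, Ω i j) = θ i * (S1 * ∑ m, P (π i) m * d m) := by
    intro i
    have : (∑ j, Ω i j) = ∑ j, θ j * (θ i * P (π i) (π j)) := by
      refine Finset.sum_congr rfl fun j _ => ?_; rw [hΩ]; ring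
    rw [this, hfib θ (fun l => θ i * P (π i) l)]
    rw [Finset.mul_sum, Finset.mul_sum]
    refine Finset.sum_congr rfl fun k _ => ?_
    rw [hfibd k]; ring
  have htot : (∑ i, ∑ j, Ω i j) = S1 ^ 2 * D := by
    calc (∑ i, ∑ j, Ω i j) = ∑ i, θ i * (S1 * ∑ m, P (π i) m * d m) :=
            Finset.sum_congr rfl fun i _ => hrow i
      _ = ∑ k, (∑ i ∈ univ.filter (fun i => π i = k), θ i) * (S1 * ∑ m, P k m * d m) :=
            hfib θ (fun k => S1 * ∑ m, P k m * d m)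
      _ = ∑ k, S1 ^ 2 * ∑ m, d k * P k m * d m := by
            refine Finset.sum_congr rfl fun k _ => ?_
            rw [hfibd k, Finset.mul_sum, Finset.mul_sum, Finset.mul_sum]
            exact Finset.sum_congr rfl fun l _ => by ring
      _ = S1 ^ 2 * D := by rw [← Finset.mul_sum, ← hD]
  -- part (i)
  have part1 : ∀ i j, centered Ω i j = θ i * θ j * Pt (π i) (π j) := by
    intro i j
    rw [centered, htot, hrow i, hrow j, hΩ, hPt]
    field_simp
  -- part (iii)
  have hfibg : ∀ k, (∑ i ∈ univ.filter (fun i => π i = k), (θ i) ^ 2) = S2 * g k := by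
    intro k; rw [hg k]; field_simp
  have part3 : (∑ i, centered Ω i i) = S2 * ∑ k, Pt k k * g k := by
    have h1 : (∑ i, centered Ω i i) = ∑ i, (θ i) ^ 2 * Pt (π i) (π i) := by
      refine Finset.sum_congr rfl fun i _ => ?_
      rw [part1]; ring
    rw [h1, hfib (fun i => (θ i) ^ 2) (fun k => Pt k k), Finset.mul_sum]
    refine Finset.sum_congr rfl fun k _ => ?_
    rw [hfibg k]; ring
  -- part (ii): rank
  -- the membership-weighted matrix A = ΘΠ
  set A : Matrix (Fin n) (Fin K) ℝ := Matrix.of (fun i k => θ i * (if π i = k then 1 else 0))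
    with hA
  have hAmul : ∀ x : Fin K → ℝ, A.mulVecLin x = fun i => θ i * x (π i) := by
    intro x
    funext i
    simp only [Matrix.mulVecLin_apply, Matrix.mulVec, dotProduct, hA, Matrix.of_apply]
    rw [Finset.sum_eq_single (π i)]
    · simp
    · intro b _ hb; simp [Ne.symm hb]
    · simp
  have hAinj : Function.Injective A.mulVecLin := by
    intro x y hxy
    funext k
    obtain ⟨i, rfl⟩ := hπ k
    have := congrFun hxy i
    rw [hAmul, hAmul] at this
    exact mul_left_cancel₀ (hθ i).ne' this
  set M : Matrix (Fin K) (Fin K) ℝ := Matrix.of Pt with hM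
  have hfact : Matrix.of (centered Ω) = A * (M * A.transpose) := by
    ext i j
    rw [Matrix.of_apply, part1, Matrix.mul_apply]
    have : ∀ k, A i k * (M * A.transpose) k j = (if π i = k then θ i * (M * A.transpose) k j else 0) := by
      intro k
      simp only [hA, Matrix.of_apply]
      by_cases h : π i = k <;> simp [h]
    rw [Finset.sum_congr rfl fun k _ => this k, Finset.sum_ite_eq univ (π i), if_pos (mem_univ _)]
    rw [Matrix.mul_apply]
    have : ∀ l, M (π i) l * A.transpose l j = (if π j = l then θ j * M (π i) l else 0) := by
      intro l
      simp only [hA, Matrix.transpose_apply, Matrix.of_apply]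
      by_cases h : π j = l <;> simp [h, mul_comm]
    rw [Finset.sum_congr rfl fun l _ => this l, Finset.sum_ite_eq univ (π j), if_pos (mem_univ _)]
    simp only [hM, Matrix.of_apply]
    ring
  -- kernel of Pt is the span of d
  have hPinj : Function.Injective (Matrix.of P).mulVec :=
    Matrix.mulVec_injective_iff_isUnit.2 ((Matrix.isUnit_iff_isUnit_det _).2 (isUnit_iff_ne_zero.2 hPdet))
  have hsym : (∑ l, (∑ m, P l m * d m) * d l) = D := by
    rw [hD]
    refine Finset.sum_congr rfl fun k' _ => ?_
    rw [Finset.sum_mul]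
    exact Finset.sum_congr rfl fun l _ => by ring
  have hPdzero : ∀ k, ∑ l, Pt k l * d l = 0 := by
    intro k
    have hexp : (∑ l, Pt k l * d l)
        = (∑ l, P k l * d l) - D⁻¹ * (∑ m, P k m * d m) * (∑ l, (∑ m, P l m * d m) * d l) := by
      rw [Finset.mul_sum, ← Finset.sum_sub_distrib]
      refine Finset.sum_congr rfl fun l _ => ?_
      rw [hPt]; ring
    rw [hexp, hsym]
    field_simp
    ring
  have hker : LinearMap.ker M.mulVecLin = Submodule.span ℝ {d} := by
    apply le_antisymm
    · intro x hx
      rw [LinearMap.mem_ker] at hx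
      set c : ℝ := D⁻¹ * ∑ l, (∑ m, P l m * d m) * x l with hc
      have hPx : (Matrix.of P).mulVec (x - c • d) = 0 := by
        funext k
        have h0 := congrFun hx k
        simp only [Matrix.mulVecLin_apply, Matrix.mulVec, dotProduct, hM,
          Matrix.of_apply, Pi.zero_apply] at h0
        have hexp : (∑ l, Pt k l * x l)
            = (∑ l, P k l * x l)
              - D⁻¹ * (∑ m, P k m * d m) * (∑ l, (∑ m, P l m * d m) * x l) := by
          rw [Finset.mul_sum, ← Finset.sum_sub_distrib]
          refine Finset.sum_congr rfl fun l _ => ?_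
          rw [hPt]; ring
        rw [hexp] at h0
        simp only [Matrix.mulVec, dotProduct, Matrix.of_apply, Pi.zero_apply,
          Pi.sub_apply, Pi.smul_apply, smul_eq_mul]
        have e1 : (∑ l, P k l * (x l - c * d l))
            = (∑ l, P k l * x l) - c * ∑ l, P k l * d l := by
          rw [Finset.mul_sum, ← Finset.sum_sub_distrib]
          exact Finset.sum_congr rfl fun l _ => by ring
        rw [e1, hc]
        linear_combination h0
      have hx0 : x - c • d = 0 := by
        apply hPinj
        rw [hPx, Matrix.mulVec_zero]
      rw [sub_eq_zero.1 hx0]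
      exact Submodule.smul_mem _ c (Submodule.mem_span_singleton_self d)
    · rw [Submodule.span_le, Set.singleton_subset_iff]
      rw [SetLike.mem_coe, LinearMap.mem_ker]
      funext k
      simp only [Matrix.mulVecLin_apply, Matrix.mulVec, dotProduct, hM,
        Matrix.of_apply, Pi.zero_apply]
      exact hPdzero k
  have hdne : d ≠ 0 := by
    intro h
    have := hdpos (Classical.arbitrary (Fin K))
    rw [h] at this
    simp at this
  have hMrank : M.rank = K - 1 := by
    have hrn : M.rank + Module.finrank ℝ (LinearMap.ker M.mulVecLin) = K := by
      rw [Matrix.rank, LinearMap.finrank_range_add_finrank_ker M.mulVecLin,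
        Module.finrank_fin_fun]
    rw [hker, finrank_span_singleton hdne] at hrn
    omega
  have part2 : (Matrix.of (centered Ω)).rank = K - 1 := by
    rw [hfact, rank_mul_of_inj _ _ hAinj, ← Matrix.rank_transpose, Matrix.transpose_mul,
      Matrix.transpose_transpose, rank_mul_of_inj _ _ hAinj, Matrix.rank_transpose, hMrank]
  refine ⟨part1, part2, part3, ?_⟩
  -- part (iv)
  intro hK2 k₀ k₁ hne
  -- sums over `Fin K` are two-term sums
  have huniv : (univ : Finset (Fin K)) = {k₀, k₁} := by
    symm
    apply Finset.eq_univ_of_card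
    rw [Finset.card_pair hne, Fintype.card_fin, hK2]
  have hsum2 : ∀ f : Fin K → ℝ, (∑ k, f k) = f k₀ + f k₁ := by
    intro f
    rw [huniv, Finset.sum_pair hne]
  have hcases : ∀ k : Fin K, k = k₀ ∨ k = k₁ := by
    intro k
    have : k ∈ ({k₀, k₁} : Finset (Fin K)) := huniv ▸ mem_univ k
    simpa using this
  have hDeq : D = P k₀ k₀ * (d k₀) ^ 2 + 2 * P k₀ k₁ * d k₀ * d k₁ + P k₁ k₁ * (d k₁) ^ 2 := by
    rw [hD, hsum2 (fun k => ∑ l, d k * P k l * d l), hsum2 (fun l => d k₀ * P k₀ l * d l),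
      hsum2 (fun l => d k₁ * P k₁ l * d l), hPsymm k₁ k₀]
    ring
  -- `Pt` is a rank-one outer product
  set w : Fin K → ℝ := fun k => if k = k₀ then d k₁ else -(d k₀) with hw
  set c₀ : ℝ := (P k₀ k₀ * P k₁ k₁ - (P k₀ k₁) ^ 2) / D with hc₀
  have hwk₀ : w k₀ = d k₁ := by simp [hw]
  have hwk₁ : w k₁ = -(d k₀) := by simp [hw, Ne.symm hne]
  have hDne2 : P k₀ k₀ * (d k₀) ^ 2 + 2 * P k₀ k₁ * d k₀ * d k₁ + P k₁ k₁ * (d k₁) ^ 2 ≠ 0 :=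
    hDeq ▸ hdPd
  have hPtw : ∀ k l, Pt k l = c₀ * w k * w l := by
    have key : ∀ k l, Pt k l = P k l
        - D⁻¹ * (P k k₀ * d k₀ + P k k₁ * d k₁) * (P l k₀ * d k₀ + P l k₁ * d k₁) := by
      intro k l
      rw [hPt, hsum2 (fun m => P k m * d m), hsum2 (fun m => P l m * d m)]
    have h00 : Pt k₀ k₀ = c₀ * w k₀ * w k₀ := by
      rw [key, hwk₀, hc₀]; field_simp; rw [hDeq]; ring
    have h01 : Pt k₀ k₁ = c₀ * w k₀ * w k₁ := by
      rw [key, hwk₀, hwk₁, hc₀, hPsymm k₁ k₀]; field_simp; rw [hDeq]; ring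
    have h10 : Pt k₁ k₀ = c₀ * w k₁ * w k₀ := by
      rw [key, hwk₀, hwk₁, hc₀, hPsymm k₁ k₀]; field_simp; rw [hDeq]; ring
    have h11 : Pt k₁ k₁ = c₀ * w k₁ * w k₁ := by
      rw [key, hwk₁, hc₀, hPsymm k₁ k₀]; field_simp; rw [hDeq]; ring
    intro k l
    rcases hcases k with rfl | rfl <;> rcases hcases l with rfl | rfl
    exacts [h00, h01, h10, h11]
  -- the trace formula
  have htr : (∑ i, centered Ω i i)
      = S2 * ((P k₀ k₀ * P k₁ k₁ - (P k₀ k₁) ^ 2) *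
          ((d k₁) ^ 2 * g k₀ + (d k₀) ^ 2 * g k₁)) /
        (P k₀ k₀ * (d k₀) ^ 2 + 2 * P k₀ k₁ * d k₀ * d k₁ + P k₁ k₁ * (d k₁) ^ 2) := by
    rw [part3, hsum2 (fun k => Pt k k * g k), hPtw k₀ k₀, hPtw k₁ k₁, hwk₀, hwk₁, hc₀, hDeq]
    field_simp [hS2.ne']
  refine ⟨htr, ?_⟩
  -- the eigenvalue characterisation
  intro x hx
  set u : Fin n → ℝ := fun i => θ i * w (π i) with hu
  have hcu : ∀ i j, centered Ω i j = c₀ * u i * u j := by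
    intro i j
    rw [part1, hPtw, hu]
    ring
  have htr2 : (∑ i, centered Ω i i) = c₀ * ∑ i, (u i) ^ 2 := by
    rw [Finset.mul_sum]
    refine Finset.sum_congr rfl fun i _ => ?_
    rw [hcu]; ring
  constructor
  · rintro ⟨v, hv0, hvev⟩
    have hs : ∀ i, c₀ * (∑ j, u j * v j) * u i = x * v i := by
      intro i
      rw [← hvev i, Finset.mul_sum, Finset.sum_mul]
      refine Finset.sum_congr rfl fun j _ => ?_
      rw [hcu]; ring
    by_cases hcs : c₀ * (∑ j, u j * v j) = 0
    · exfalso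
      apply hv0
      funext i
      have h1 := (hs i).symm
      rw [hcs, zero_mul] at h1
      rcases mul_eq_zero.1 h1 with h | h
      · exact absurd h hx
      · exact h
    · have hveq : ∀ i, v i = c₀ * (∑ j, u j * v j) / x * u i := by
        intro i
        rw [div_mul_eq_mul_div, eq_div_iff hx]
        linear_combination -(hs i)
      have hkey : (∑ j, u j * v j) = c₀ * (∑ j, u j * v j) / x * ∑ j, (u j) ^ 2 := by
        rw [Finset.mul_sum]
        refine Finset.sum_congr rfl fun j _ => ?_
        rw [hveq j]; ring
      have hsne : (∑ j, u j * v j) ≠ 0 := fun h => hcs (by rw [h, mul_zero])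
      have h3 : (∑ j, u j * v j) * x = (∑ j, u j * v j) * (c₀ * ∑ j, (u j) ^ 2) := by
        calc (∑ j, u j * v j) * x
            = (c₀ * (∑ j, u j * v j) / x * ∑ j, (u j) ^ 2) * x := by rw [← hkey]
          _ = (∑ j, u j * v j) * (c₀ * ∑ j, (u j) ^ 2) := by
              field_simp
      rw [htr2]
      exact mul_left_cancel₀ hsne h3
  · intro hxe
    refine ⟨u, ?_, ?_⟩
    · intro hu0
      apply hx
      rw [hxe, htr2, hu0]
      simp
    · intro i
      rw [hxe, htr2]
      have h4 : (∑ j, centered Ω i j * u j) = c₀ * (∑ j, (u j) ^ 2) * u i := by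
        rw [Finset.mul_sum, Finset.sum_mul]
        refine Finset.sum_congr rfl fun j _ => ?_
        rw [hcu]; ring
      rw [h4]
end

section
/- Rank-one representation of the centered Bernoulli probability matrix for K = 2. Let Ω = ΘΠPΠ′Θ with θ ∈ ℝ^n positive, two nonempty communities S and S^c encoded by Π, and P = [[1, b],[b, 1]] for some b ∈ ℝ. Let v₀ = 1_n′Ω1_n and assume v₀ ≠ 0. Let f = (‖θ_{S^c}‖₁, −‖θ_S‖₁)′ ∈ ℝ², where θ_S denotes the restriction of θ to S. Then Ω̃ := Ω − v₀^{-1}Ω1_n1_n′Ω = ((1 − b²)/v₀) · ΘΠ f f′ Π′Θ. Equivalently, entrywise: Ω̃_{ij} = θ_iθ_j(1−b²)‖θ_{S^c}‖₁²/v₀ if i,j ∈ S; Ω̃_{ij} = −θ_iθ_j(1−b²)‖θ_S‖₁‖θ_{S^c}‖₁/v₀ if exactly one of i,j is in S; and Ω̃_{ij} = θ_iθ_j(1−b²)‖θ_S‖₁²/v₀ if i,j ∈ S^c. -/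
/-!
Row `i` of `Ω` sums to `θᵢ rᵢ`, where `rᵢ = a + b c` on `S` and `b a + c` on `Sᶜ`, with
`a = ‖θ_S‖₁` and `c = ‖θ_{Sᶜ}‖₁`; hence `v₀ = a² + 2abc + c²`. Then `v₀ Pᵢⱼ - rᵢ rⱼ` equals
`(1 - b²) fᵢ fⱼ` with `f = c` on `S` and `f = -a` on `Sᶜ`, a polynomial identity in each of the
four block cases, e.g. `v₀ - (a + b c)² = (1 - b²) c²`.
-/

open Finset

section TwoBlock

variable {ι R : Type*} [Fintype ι] [DecidableEq ι] [CommRing R] (S : Finset ι)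

theorem sum_mul_ite_mem (x : ι → R) (A B : R) :
    ∑ k, x k * (if k ∈ S then A else B) = A * ∑ k ∈ S, x k + B * ∑ k ∈ Sᶜ, x k := by
  rw [← sum_add_sum_compl S, mul_sum, mul_sum]
  congr 1 <;> refine sum_congr rfl fun k hk => ?_
  · rw [if_pos hk, mul_comm]
  · rw [if_neg (mem_compl.mp hk), mul_comm]

theorem sum_two_block_row (θ : ι → R) (b : R) (i : ι) :
    ∑ k, θ i * θ k * (if (i ∈ S ↔ k ∈ S) then 1 else b) =
      θ i * (if i ∈ S then ∑ k ∈ S, θ k + b * ∑ k ∈ Sᶜ, θ k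
        else b * ∑ k ∈ S, θ k + ∑ k ∈ Sᶜ, θ k) := by
  have hblock : ∀ k, (if (i ∈ S ↔ k ∈ S) then 1 else b) =
      if k ∈ S then (if i ∈ S then 1 else b) else (if i ∈ S then b else 1) := by
    intro k
    by_cases hi : i ∈ S <;> by_cases hk : k ∈ S <;> simp [hi, hk]
  simp_rw [hblock, mul_assoc, ← mul_sum, sum_mul_ite_mem]
  split_ifs <;> ring

theorem sum_two_block (θ : ι → R) (b : R) :
    ∑ i, ∑ k, θ i * θ k * (if (i ∈ S ↔ k ∈ S) then 1 else b) =
      (∑ k ∈ S, θ k) ^ 2 + 2 * b * (∑ k ∈ S, θ k) * (∑ k ∈ Sᶜ, θ k) + (∑ k ∈ Sᶜ, θ k) ^ 2 := by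
  simp_rw [sum_two_block_row, sum_mul_ite_mem]
  ring

end TwoBlock

theorem two_block_centering_identity {R : Type*} [CommRing R] (a b c : R)
    (p q : Prop) [Decidable p] [Decidable q] :
    (a ^ 2 + 2 * b * a * c + c ^ 2) * (if (p ↔ q) then 1 else b) -
        (if p then a + b * c else b * a + c) * (if q then a + b * c else b * a + c) =
      (1 - b ^ 2) * ((if p then c else -a) * (if q then c else -a)) := by
  by_cases hp : p <;> by_cases hq : q <;>
    simp only [hp, hq, iff_self, iff_true, iff_false, not_true_eq_false, if_true, if_false] <;>
    ring

theorem centered_matrix_rank_one_general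
    (n : ℕ) (θ : Fin n → ℝ)
    (S : Finset (Fin n))
    (b : ℝ)
    (Ω : Fin n → Fin n → ℝ)
    (hΩ : ∀ i j, Ω i j = θ i * θ j * (if (i ∈ S ↔ j ∈ S) then 1 else b))
    (v₀ : ℝ) (hv₀ : v₀ = ∑ i, ∑ j, Ω i j) (hv₀ne : v₀ ≠ 0) :
    ∀ i j, centered Ω i j =
      ((1 - b ^ 2) / v₀) * θ i * θ j *
        ((if i ∈ S then ∑ k ∈ Sᶜ, θ k else -(∑ k ∈ S, θ k)) *
         (if j ∈ S then ∑ k ∈ Sᶜ, θ k else -(∑ k ∈ S, θ k))) := by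
  intro i j
  have hrow := sum_two_block_row S θ b
  have htotal := sum_two_block S θ b
  simp only [← hΩ, ← hv₀] at hrow htotal
  have key := two_block_centering_identity (∑ k ∈ S, θ k) b (∑ k ∈ Sᶜ, θ k) (i ∈ S) (j ∈ S)
  rw [← htotal] at key
  unfold centered
  rw [← hv₀, hrow i, hrow j, hΩ]
  linear_combination θ i * θ j * v₀⁻¹ * key -
    θ i * θ j * (if (i ∈ S ↔ j ∈ S) then 1 else b) * mul_inv_cancel₀ hv₀ne

/-- Rank-one representation of the centered Bernoulli probability
matrix for `K = 2` with unit-diagonal `P`: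
`Ω̃ = ((1-b²)/v₀) ΘΠ f f' Π'Θ` where `f = (‖θ_{Sᶜ}‖₁, -‖θ_S‖₁)'`. -/
theorem centered_matrix_rank_one
    (n : ℕ) (θ : Fin n → ℝ) (hθ : ∀ i, 0 < θ i)
    (S : Finset (Fin n)) (hS : S.Nonempty) (hSc : Sᶜ.Nonempty)
    (b : ℝ)
    (Ω : Fin n → Fin n → ℝ)
    (hΩ : ∀ i j, Ω i j = θ i * θ j * (if (i ∈ S ↔ j ∈ S) then 1 else b))
    (v₀ : ℝ) (hv₀ : v₀ = ∑ i, ∑ j, Ω i j) (hv₀ne : v₀ ≠ 0) :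
    ∀ i j, centered Ω i j =
      ((1 - b ^ 2) / v₀) * θ i * θ j *
        ((if i ∈ S then ∑ k ∈ Sᶜ, θ k else -(∑ k ∈ S, θ k)) *
         (if j ∈ S then ∑ k ∈ Sᶜ, θ k else -(∑ k ∈ S, θ k))) :=
  centered_matrix_rank_one_general n θ S b Ω hΩ v₀ hv₀ hv₀ne
end

section
/- Comparison of λ̃ with the eigenvalues of a rank-two Ω. Let Ω = λ₁ξ₁ξ₁′ + λ₂ξ₂ξ₂′ with ξ₁, ξ₂ orthonormal, λ₁ ≥ λ₂, λ₁ > 0, λ₂ ≠ 0, and assume v₀ = λ₁⟨ξ₁,1_n⟩² + λ₂⟨ξ₂,1_n⟩² > 0 and ⟨ξ₁,1_n⟩² + ⟨ξ₂,1_n⟩² > 0. Let λ̃ = λ₁λ₂(⟨ξ₁,1_n⟩² + ⟨ξ₂,1_n⟩²)/v₀ be the nonzero eigenvalue of Ω̃ = Ω − v₀^{-1}Ω1_n1_n′Ω. Then: (i) if λ₂ > 0, then λ₂ ≤ λ̃ ≤ λ₁; (ii) if λ₂ < 0, then |λ̃| ≥ |λ₂|. -/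
section CenteredEigenvalue

variable {K : Type*} [Field K]

/-- The eigenvalue `λ̃` of `Ω̃`, as a function of `λ₁, λ₂` and `sᵢ = ⟨ξᵢ, 1ₙ⟩`. -/
def centeredEigenvalue (l₁ l₂ s₁ s₂ : K) : K :=
  l₁ * l₂ * (s₁ ^ 2 + s₂ ^ 2) / (l₁ * s₁ ^ 2 + l₂ * s₂ ^ 2)

theorem centeredEigenvalue_sub {l₁ l₂ s₁ s₂ : K} (hv : l₁ * s₁ ^ 2 + l₂ * s₂ ^ 2 ≠ 0) :
    centeredEigenvalue l₁ l₂ s₁ s₂ - l₂ =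
      l₂ * (l₁ - l₂) * s₂ ^ 2 / (l₁ * s₁ ^ 2 + l₂ * s₂ ^ 2) := by
  rw [centeredEigenvalue, eq_div_iff hv, sub_mul, div_mul_cancel₀ _ hv]
  ring

theorem sub_centeredEigenvalue {l₁ l₂ s₁ s₂ : K} (hv : l₁ * s₁ ^ 2 + l₂ * s₂ ^ 2 ≠ 0) :
    l₁ - centeredEigenvalue l₁ l₂ s₁ s₂ =
      l₁ * (l₁ - l₂) * s₁ ^ 2 / (l₁ * s₁ ^ 2 + l₂ * s₂ ^ 2) := by
  rw [centeredEigenvalue, eq_div_iff hv, sub_mul, div_mul_cancel₀ _ hv]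
  ring

variable [LinearOrder K] [IsStrictOrderedRing K] {l₁ l₂ s₁ s₂ : K}

theorem le_centeredEigenvalue (h₂ : 0 ≤ l₂) (hord : l₂ ≤ l₁)
    (hv : 0 < l₁ * s₁ ^ 2 + l₂ * s₂ ^ 2) : l₂ ≤ centeredEigenvalue l₁ l₂ s₁ s₂ := by
  rw [← sub_nonneg, centeredEigenvalue_sub hv.ne']
  have : 0 ≤ l₁ - l₂ := sub_nonneg.2 hord
  positivity

theorem centeredEigenvalue_le (h₁ : 0 ≤ l₁) (hord : l₂ ≤ l₁)
    (hv : 0 < l₁ * s₁ ^ 2 + l₂ * s₂ ^ 2) : centeredEigenvalue l₁ l₂ s₁ s₂ ≤ l₁ := by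
  rw [← sub_nonneg, sub_centeredEigenvalue hv.ne']
  have : 0 ≤ l₁ - l₂ := sub_nonneg.2 hord
  positivity

theorem centeredEigenvalue_le_of_nonpos (h₂ : l₂ ≤ 0) (hord : l₂ ≤ l₁)
    (hv : 0 < l₁ * s₁ ^ 2 + l₂ * s₂ ^ 2) : centeredEigenvalue l₁ l₂ s₁ s₂ ≤ l₂ := by
  rw [← sub_nonpos, centeredEigenvalue_sub hv.ne']
  refine div_nonpos_of_nonpos_of_nonneg ?_ hv.le
  exact mul_nonpos_of_nonpos_of_nonneg (mul_nonpos_of_nonpos_of_nonneg h₂ (sub_nonneg.2 hord))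
    (sq_nonneg s₂)

end CenteredEigenvalue

theorem centered_eigenvalue_comparison_general
    (lam₁ lam₂ : ℝ) (hord : lam₂ ≤ lam₁) (hlam₁ : 0 < lam₁)
    (s₁ s₂ : ℝ)
    (v₀ : ℝ) (hv₀ : v₀ = lam₁ * s₁ ^ 2 + lam₂ * s₂ ^ 2) (hv₀pos : 0 < v₀)
    (lamt : ℝ)
    (hlamt : lamt = lam₁ * lam₂ * (s₁ ^ 2 + s₂ ^ 2) / v₀) :
    (0 < lam₂ → lam₂ ≤ lamt ∧ lamt ≤ lam₁) ∧
    (lam₂ < 0 → |lam₂| ≤ |lamt|) := by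
  subst hv₀
  replace hlamt : lamt = centeredEigenvalue lam₁ lam₂ s₁ s₂ := hlamt
  subst hlamt
  constructor
  · exact fun h₂ => ⟨le_centeredEigenvalue h₂.le hord hv₀pos,
      centeredEigenvalue_le hlam₁.le hord hv₀pos⟩
  · exact fun h₂ =>
      abs_le_abs_of_nonpos h₂.le (centeredEigenvalue_le_of_nonpos h₂.le hord hv₀pos)

/-- Comparison of the eigenvalue `λ̃` of the centered matrix with the
eigenvalues `λ₁ ≥ λ₂` of the rank-two matrix `Ω = λ₁ξ₁ξ₁' + λ₂ξ₂ξ₂'`: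
if `λ₂ > 0` then `λ₂ ≤ λ̃ ≤ λ₁`, and if `λ₂ < 0` then `|λ̃| ≥ |λ₂|`. -/
theorem centered_eigenvalue_comparison
    (n : ℕ) (ξ₁ ξ₂ : Fin n → ℝ)
    (hξ₁ : ∑ i, (ξ₁ i) ^ 2 = 1) (hξ₂ : ∑ i, (ξ₂ i) ^ 2 = 1)
    (horth : ∑ i, ξ₁ i * ξ₂ i = 0)
    (lam₁ lam₂ : ℝ) (hord : lam₂ ≤ lam₁) (hlam₁ : 0 < lam₁) (hlam₂ : lam₂ ≠ 0)
    (Ω : Fin n → Fin n → ℝ)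
    (hΩ : ∀ i j, Ω i j = lam₁ * ξ₁ i * ξ₁ j + lam₂ * ξ₂ i * ξ₂ j)
    (s₁ s₂ : ℝ) (hs₁ : s₁ = ∑ i, ξ₁ i) (hs₂ : s₂ = ∑ i, ξ₂ i)
    (v₀ : ℝ) (hv₀ : v₀ = lam₁ * s₁ ^ 2 + lam₂ * s₂ ^ 2) (hv₀pos : 0 < v₀)
    (hs : 0 < s₁ ^ 2 + s₂ ^ 2)
    (lamt : ℝ)
    (hlamt : lamt = lam₁ * lam₂ * (s₁ ^ 2 + s₂ ^ 2) / v₀) :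
    (0 < lam₂ → lam₂ ≤ lamt ∧ lamt ≤ lam₁) ∧
    (lam₂ < 0 → |lam₂| ≤ |lamt|) :=
  centered_eigenvalue_comparison_general lam₁ lam₂ hord hlam₁ s₁ s₂ v₀ hv₀ hv₀pos lamt hlamt
end

section
/- Lower bound on the largest eigenvalue of Ω. Let Ω ∈ ℝ^{n×n} be symmetric with nonnegative entries, let θ ∈ ℝ^n be a positive vector, and let S ⊆ {1,…,n} be such that Ω_{ij} ≥ θ_iθ_j whenever i, j ∈ S or i, j ∈ S^c. Then the largest eigenvalue λ₁ of Ω satisfies λ₁ ≥ (‖θ_S‖₂⁴ + ‖θ_{S^c}‖₂⁴)/‖θ‖₂² ≥ ‖θ‖₂²/2, where θ_U denotes the restriction of θ to U and ‖·‖₂ the Euclidean norm. -/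
open Finset

open Matrix

/-- Rayleigh-quotient upper bound via the largest eigenvalue. -/
lemma rayleigh_le {n : ℕ} (Ω : Matrix (Fin n) (Fin n) ℝ) (hA : Ω.IsHermitian)
    (lam₁ : ℝ) (hub : ∀ μ, IsEigen Ω μ → μ ≤ lam₁) (x : Fin n → ℝ) :
    x ⬝ᵥ (Ω *ᵥ x) ≤ lam₁ * (x ⬝ᵥ x) := by
  classical
  set U : Matrix (Fin n) (Fin n) ℝ := (hA.eigenvectorUnitary : Matrix (Fin n) (Fin n) ℝ) with hU
  set y : Fin n → ℝ := star U *ᵥ x with hy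
  have hUy : U *ᵥ y = x := by
    rw [hy, mulVec_mulVec, (Matrix.mem_unitaryGroup_iff).mp hA.eigenvectorUnitary.2, one_mulVec]
  have hstar : star U = Uᵀ := U.conjTranspose_eq_transpose_of_trivial
  have hev : ∀ i, hA.eigenvalues i ≤ lam₁ := by
    intro i
    refine hub _ ⟨hA.eigenvectorBasis i, (WithLp.ofLp_eq_zero 2).not.mpr (hA.eigenvectorBasis.orthonormal.ne_zero i), fun j => ?_⟩
    have := congrFun (hA.mulVec_eigenvectorBasis i) j
    simpa [Matrix.mulVec, dotProduct] using this
  have h1 : x ⬝ᵥ (Ω *ᵥ x) = ∑ i, hA.eigenvalues i * (y i) ^ 2 := by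
    conv_lhs => rw [hA.spectral_theorem, Unitary.conjStarAlgAut_apply]
    rw [← mulVec_mulVec, ← mulVec_mulVec, dotProduct_mulVec, ← mulVec_transpose, ← hstar, ← hy]
    simp [dotProduct, mulVec_diagonal]
    exact Finset.sum_congr rfl fun i _ => by ring
  have h2 : x ⬝ᵥ x = ∑ i, (y i) ^ 2 := by
    conv_lhs => rw [← hUy]
    rw [dotProduct_mulVec, ← mulVec_transpose, ← hstar, mulVec_mulVec,
      (Matrix.mem_unitaryGroup_iff').mp hA.eigenvectorUnitary.2, one_mulVec]
    simp [dotProduct, sq]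
  rw [h1, h2, Finset.mul_sum]
  exact Finset.sum_le_sum fun i _ => mul_le_mul_of_nonneg_right (hev i) (sq_nonneg _)

/-- Lower bound on the largest eigenvalue of `Ω`: if
`Ω_{ij} ≥ θᵢθⱼ` within each of the two blocks `S`, `Sᶜ`, then
`λ₁ ≥ (‖θ_S‖₂⁴ + ‖θ_{Sᶜ}‖₂⁴)/‖θ‖₂² ≥ ‖θ‖₂²/2`. -/
theorem largest_eigenvalue_lower_bound
    (n : ℕ) (Ω : Fin n → Fin n → ℝ)
    (hsymm : ∀ i j, Ω i j = Ω j i) (hnn : ∀ i j, 0 ≤ Ω i j)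
    (θ : Fin n → ℝ) (hθ : ∀ i, 0 < θ i)
    (S : Finset (Fin n))
    (hbound : ∀ i j, ((i ∈ S ∧ j ∈ S) ∨ (i ∉ S ∧ j ∉ S)) → θ i * θ j ≤ Ω i j)
    (lam₁ : ℝ) (hlam₁ : IsGreatest {x : ℝ | IsEigen Ω x} lam₁) :
    ((∑ i ∈ S, (θ i) ^ 2) ^ 2 + (∑ i ∈ Sᶜ, (θ i) ^ 2) ^ 2) / (∑ i, (θ i) ^ 2) ≤ lam₁ ∧
    (∑ i, (θ i) ^ 2) / 2 ≤
      ((∑ i ∈ S, (θ i) ^ 2) ^ 2 + (∑ i ∈ Sᶜ, (θ i) ^ 2) ^ 2) / (∑ i, (θ i) ^ 2) := by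
  classical
  rcases Nat.eq_zero_or_pos n with hn | hn
  · subst hn
    obtain ⟨v, hv, -⟩ := hlam₁.1
    exact (hv (Subsingleton.elim v 0)).elim
  have hA : Matrix.IsHermitian (Matrix.of Ω) := by
    ext i j; simpa using hsymm j i
  set A : ℝ := ∑ i ∈ S, (θ i) ^ 2 with hAdef
  set B : ℝ := ∑ i ∈ Sᶜ, (θ i) ^ 2 with hBdef
  have hT : (∑ i, (θ i) ^ 2) = A + B := (Finset.sum_add_sum_compl S _).symm
  have hTpos : 0 < ∑ i, (θ i) ^ 2 :=
    Finset.sum_pos (fun i _ => pow_pos (hθ i) 2)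
      (Finset.univ_nonempty_iff.mpr ⟨⟨0, hn⟩⟩)
  -- lower bound on the quadratic form
  have hblock : ∀ (U : Finset (Fin n)), (∀ i j, i ∈ U → j ∈ U → θ i * θ j ≤ Ω i j) →
      (∑ i ∈ U, (θ i) ^ 2) ^ 2 ≤ ∑ i ∈ U, θ i * ∑ j, Ω i j * θ j := by
    intro U hb
    have : (∑ i ∈ U, (θ i) ^ 2) ^ 2 = ∑ i ∈ U, θ i * ∑ j ∈ U, θ i * θ j * θ j := by
      rw [sq, Finset.sum_mul_sum]
      refine Finset.sum_congr rfl fun i _ => ?_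
      rw [Finset.mul_sum]
      refine Finset.sum_congr rfl fun j _ => ?_
      ring
    rw [this]
    refine Finset.sum_le_sum fun i hi => ?_
    refine mul_le_mul_of_nonneg_left ?_ (hθ i).le
    calc ∑ j ∈ U, θ i * θ j * θ j ≤ ∑ j ∈ U, Ω i j * θ j :=
          Finset.sum_le_sum fun j hj =>
            mul_le_mul_of_nonneg_right (hb i j hi hj) (hθ j).le
      _ ≤ ∑ j, Ω i j * θ j :=
          Finset.sum_le_sum_of_subset_of_nonneg (Finset.subset_univ U)
            (fun j _ _ => mul_nonneg (hnn i j) (hθ j).le)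
  have hQ : A ^ 2 + B ^ 2 ≤ θ ⬝ᵥ (Matrix.of Ω *ᵥ θ) := by
    have hS := hblock S (fun i j hi hj => hbound i j (Or.inl ⟨hi, hj⟩))
    have hSc := hblock Sᶜ (fun i j hi hj =>
      hbound i j (Or.inr ⟨Finset.mem_compl.mp hi, Finset.mem_compl.mp hj⟩))
    have : θ ⬝ᵥ (Matrix.of Ω *ᵥ θ) = ∑ i ∈ S, θ i * ∑ j, Ω i j * θ j
        + ∑ i ∈ Sᶜ, θ i * ∑ j, Ω i j * θ j := by
      simp only [dotProduct, Matrix.mulVec, Matrix.of_apply]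
      exact (Finset.sum_add_sum_compl S _).symm
    rw [this]
    exact add_le_add hS hSc
  have hray := rayleigh_le (Matrix.of Ω) hA lam₁ (fun μ hμ => hlam₁.2 hμ) θ
  have hθθ : θ ⬝ᵥ θ = ∑ i, (θ i) ^ 2 := by simp [dotProduct, sq]
  have h1 : A ^ 2 + B ^ 2 ≤ lam₁ * ∑ i, (θ i) ^ 2 := by
    calc A ^ 2 + B ^ 2 ≤ θ ⬝ᵥ (Matrix.of Ω *ᵥ θ) := hQ
      _ ≤ lam₁ * (θ ⬝ᵥ θ) := hray
      _ = lam₁ * ∑ i, (θ i) ^ 2 := by rw [hθθ]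
  constructor
  · rw [div_le_iff₀ hTpos]; linarith
  · rw [le_div_iff₀ hTpos, hT]; nlinarith [sq_nonneg (A - B)]
end

section
/- Truncated exponential moment bound under a Bernstein-type tail. Let Z be a real-valued random variable and σ² > 0, b ≥ 0 be such that P(|Z| > t) ≤ 2·exp(−(t²/2)/(σ² + bt)) for all t > 0. Then for any γ > 0 and B > 0 with γ(σ² + bB) < 1/2, E[exp(γZ²)·1{|Z| ≤ B}] ≤ 1 + 4γ(σ² + bB)/(1 − 2γ(σ² + bB)). -/
open MeasureTheory Set

/-- Truncated exponential moment bound under a Bernstein-type tail: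
if `P(|Z| > t) ≤ 2 exp(-(t²/2)/(σ² + bt))` for all `t > 0` and `γ(σ² + bB) < 1/2`, then
`E[exp(γZ²)·1{|Z| ≤ B}] ≤ 1 + 4γ(σ² + bB)/(1 - 2γ(σ² + bB))`. -/
theorem truncated_exponential_moment_bound
    {Ω₀ : Type} [MeasurableSpace Ω₀] (μ : Measure Ω₀) [IsProbabilityMeasure μ]
    (Z : Ω₀ → ℝ) (hZ : Measurable Z)
    (σ2 b : ℝ) (hσ2 : 0 < σ2) (hb : 0 ≤ b)
    (htail : ∀ t : ℝ, 0 < t →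
      μ {ω | t < |Z ω|} ≤ ENNReal.ofReal (2 * Real.exp (-(t ^ 2 / 2) / (σ2 + b * t))))
    (γ B : ℝ) (hγ : 0 < γ) (hB : 0 < B)
    (hsmall : γ * (σ2 + b * B) < 1 / 2) :
    ∫ ω in {ω | |Z ω| ≤ B}, Real.exp (γ * (Z ω) ^ 2) ∂ μ ≤
      1 + 4 * γ * (σ2 + b * B) / (1 - 2 * γ * (σ2 + b * B)) := by
  set c : ℝ := σ2 + b * B with hc_def
  have hc : 0 < c := by positivity
  set a : ℝ := 1 / (2 * c) - γ with ha_def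
  have ha : 0 < a := by
    have h2c : (0:ℝ) < 2 * c := by positivity
    have : γ < 1 / (2 * c) := by
      rw [lt_div_iff₀ h2c]; nlinarith
    simpa [ha_def, sub_pos] using this
  set W : Ω₀ → ℝ := fun ω => min ((Z ω) ^ 2) (B ^ 2) with hW_def
  have hW_meas : Measurable W := (hZ.pow_const 2).min measurable_const
  have hW_nn : ∀ ω, 0 ≤ W ω := fun ω => le_min (sq_nonneg _) (sq_nonneg _)
  have hW_le : ∀ ω, W ω ≤ B ^ 2 := fun ω => min_le_right _ _
  have hexp_meas : Measurable fun ω => Real.exp (γ * W ω) :=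
    (measurable_const.mul hW_meas).exp
  have hexp_int : Integrable (fun ω => Real.exp (γ * W ω)) μ := by
    refine (integrable_const (Real.exp (γ * B ^ 2))).mono'
      hexp_meas.aestronglyMeasurable (Filter.Eventually.of_forall fun ω => ?_)
    rw [Real.norm_eq_abs, abs_of_pos (Real.exp_pos _)]
    exact Real.exp_le_exp.2 (mul_le_mul_of_nonneg_left (hW_le ω) hγ.le)
  -- Step 1: bound the set integral by the integral of exp(γ W) over everything
  have step1 : ∫ ω in {ω | |Z ω| ≤ B}, Real.exp (γ * (Z ω) ^ 2) ∂ μ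
      ≤ ∫ ω, Real.exp (γ * W ω) ∂ μ := by
    have hset : MeasurableSet {ω | |Z ω| ≤ B} := measurableSet_le hZ.abs measurable_const
    have heq : ∫ ω in {ω | |Z ω| ≤ B}, Real.exp (γ * (Z ω) ^ 2) ∂ μ
        = ∫ ω in {ω | |Z ω| ≤ B}, Real.exp (γ * W ω) ∂ μ := by
      refine setIntegral_congr_fun hset fun ω hω => ?_
      have hωB : |Z ω| ≤ B := hω
      have hZB : (Z ω) ^ 2 ≤ B ^ 2 := by
        calc (Z ω) ^ 2 = |Z ω| ^ 2 := (sq_abs _).symm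
          _ ≤ B ^ 2 := pow_le_pow_left₀ (abs_nonneg _) hωB 2
      simp [hW_def, min_eq_left hZB]
    rw [heq]
    exact setIntegral_le_integral hexp_int
      (Filter.Eventually.of_forall fun ω => (Real.exp_pos _).le)
  -- the antiderivative computation
  have hG : ∀ x : ℝ, ∫ t in (0:ℝ)..x, γ * Real.exp (γ * t) = Real.exp (γ * x) - 1 := by
    intro x
    have hderiv : ∀ t ∈ Set.uIcc (0:ℝ) x,
        HasDerivAt (fun s => Real.exp (γ * s)) (γ * Real.exp (γ * t)) t := by
      intro t _
      have h1 : HasDerivAt (fun s : ℝ => γ * s) γ t := by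
        simpa using (hasDerivAt_id t).const_mul γ
      simpa [mul_comm] using h1.exp
    rw [intervalIntegral.integral_eq_sub_of_hasDerivAt hderiv
      ((continuous_const.mul ((continuous_const.mul continuous_id).rexp)).intervalIntegrable 0 x)]
    simp
  -- layer cake formula
  have layer : ∫⁻ ω, ENNReal.ofReal (Real.exp (γ * W ω) - 1) ∂μ
      = ∫⁻ t in Ioi (0:ℝ), μ {ω | t < W ω} * ENNReal.ofReal (γ * Real.exp (γ * t)) := by
    have hlc := lintegral_comp_eq_lintegral_meas_lt_mul μ (f := W)
      (g := fun t => γ * Real.exp (γ * t))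
      (Filter.Eventually.of_forall hW_nn) hW_meas.aemeasurable
      (fun t _ => (continuous_const.mul
        ((continuous_const.mul continuous_id).rexp)).intervalIntegrable 0 t)
      (Filter.Eventually.of_forall fun t => by positivity)
    simp_rw [hG] at hlc
    exact hlc
  -- pointwise bound on the tail integrand
  have bound : ∫⁻ t in Ioi (0:ℝ), μ {ω | t < W ω} * ENNReal.ofReal (γ * Real.exp (γ * t))
      ≤ ∫⁻ t in Ioi (0:ℝ), ENNReal.ofReal (2 * γ * Real.exp (-(a * t))) := by
    refine setLIntegral_mono' measurableSet_Ioi fun t ht => ?_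
    have ht0 : (0:ℝ) < t := ht
    rcases le_or_gt (B ^ 2) t with hBt | hBt
    · have hempty : {ω | t < W ω} = ∅ := by
        ext ω
        simp only [mem_setOf_eq, mem_empty_iff_false, iff_false, not_lt]
        exact (hW_le ω).trans hBt
      simp [hempty]
    · have hsq : Real.sqrt t ≤ B := by
        rw [show B = Real.sqrt (B ^ 2) from (Real.sqrt_sq hB.le).symm]
        exact Real.sqrt_le_sqrt hBt.le
      have hsqpos : 0 < Real.sqrt t := Real.sqrt_pos.2 ht0
      have hsub : {ω | t < W ω} ⊆ {ω | Real.sqrt t < |Z ω|} := by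
        intro ω hω
        simp only [mem_setOf_eq] at hω ⊢
        have h1 : t < (Z ω) ^ 2 := lt_of_lt_of_le hω (min_le_left _ _)
        calc Real.sqrt t < Real.sqrt ((Z ω) ^ 2) := Real.sqrt_lt_sqrt ht0.le h1
          _ = |Z ω| := Real.sqrt_sq_eq_abs _
      have hμt : μ {ω | t < W ω}
          ≤ ENNReal.ofReal (2 * Real.exp (-(t / 2) / (σ2 + b * Real.sqrt t))) := by
        refine le_trans (measure_mono hsub) ?_
        have h2 := htail (Real.sqrt t) hsqpos
        rwa [Real.sq_sqrt ht0.le] at h2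
      have hdpos : 0 < σ2 + b * Real.sqrt t := by positivity
      have hden : σ2 + b * Real.sqrt t ≤ c := by
        have : b * Real.sqrt t ≤ b * B := mul_le_mul_of_nonneg_left hsq hb
        rw [hc_def]; linarith
      have hexp_le : Real.exp (-(t / 2) / (σ2 + b * Real.sqrt t))
          ≤ Real.exp (-(t / (2 * c))) := by
        apply Real.exp_le_exp.2
        rw [neg_div, neg_le_neg_iff, div_div]
        refine div_le_div_of_nonneg_left ht0.le (by positivity) ?_
        linarith
      calc μ {ω | t < W ω} * ENNReal.ofReal (γ * Real.exp (γ * t))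
          ≤ ENNReal.ofReal (2 * Real.exp (-(t / (2 * c))))
            * ENNReal.ofReal (γ * Real.exp (γ * t)) := by
            refine mul_le_mul_left (hμt.trans (ENNReal.ofReal_le_ofReal ?_)) _
            nlinarith [Real.exp_pos (-(t / 2) / (σ2 + b * Real.sqrt t))]
        _ = ENNReal.ofReal (2 * γ * Real.exp (-(a * t))) := by
            rw [← ENNReal.ofReal_mul (by positivity)]
            congr 1
            have hadd : -(t / (2 * c)) + γ * t = -(a * t) := by
              rw [ha_def]; field_simp; ring
            calc 2 * Real.exp (-(t / (2 * c))) * (γ * Real.exp (γ * t))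
                = 2 * γ * (Real.exp (-(t / (2 * c))) * Real.exp (γ * t)) := by ring
              _ = 2 * γ * Real.exp (-(a * t)) := by rw [← Real.exp_add, hadd]
  -- compute the exponential integral
  have hint : IntegrableOn (fun t : ℝ => 2 * γ * Real.exp (-(a * t))) (Ioi (0:ℝ)) := by
    show Integrable (fun t : ℝ => 2 * γ * Real.exp (-(a * t))) (volume.restrict (Ioi 0))
    simpa [neg_mul] using (exp_neg_integrableOn_Ioi 0 ha).const_mul (2 * γ)
  have hval : ∫ t in Ioi (0:ℝ), 2 * γ * Real.exp (-(a * t)) = 2 * γ / a := by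
    rw [integral_const_mul]
    have hcomp := integral_comp_mul_left_Ioi (fun y => Real.exp (-y)) 0 ha
    simp only [mul_zero, integral_exp_neg_Ioi_zero, smul_eq_mul, mul_one] at hcomp
    rw [hcomp, div_eq_mul_inv]
  have hlin : ∫⁻ t in Ioi (0:ℝ), ENNReal.ofReal (2 * γ * Real.exp (-(a * t)))
      = ENNReal.ofReal (2 * γ / a) := by
    rw [← ofReal_integral_eq_lintegral_ofReal hint
      (Filter.Eventually.of_forall fun t => by positivity), hval]
  have hmain : ∫⁻ ω, ENNReal.ofReal (Real.exp (γ * W ω) - 1) ∂μ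
      ≤ ENNReal.ofReal (2 * γ / a) := by
    rw [layer]; exact bound.trans (le_of_eq hlin)
  -- convert back to a Bochner integral bound
  have hsub_int : Integrable (fun ω => Real.exp (γ * W ω) - 1) μ :=
    hexp_int.sub (integrable_const 1)
  have hsub_nn : 0 ≤ᵐ[μ] fun ω => Real.exp (γ * W ω) - 1 := by
    refine Filter.Eventually.of_forall fun ω => ?_
    have h1 : (1:ℝ) ≤ Real.exp (γ * W ω) :=
      Real.one_le_exp (mul_nonneg hγ.le (hW_nn ω))
    simp only [Pi.zero_apply]
    linarith
  have step2 : ∫ ω, Real.exp (γ * W ω) ∂μ ≤ 1 + 2 * γ / a := by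
    have hsplit := integral_sub hexp_int (integrable_const (1:ℝ))
    rw [integral_const, Measure.real, measure_univ, ENNReal.toReal_one, smul_eq_mul, one_mul] at hsplit
    have hle : ∫ ω, (Real.exp (γ * W ω) - 1) ∂μ ≤ 2 * γ / a := by
      rw [integral_eq_lintegral_of_nonneg_ae hsub_nn hsub_int.1]
      refine le_trans (ENNReal.toReal_mono ENNReal.ofReal_ne_top hmain) ?_
      rw [ENNReal.toReal_ofReal (by positivity)]
    have := hsplit ▸ hle
    linarith
  -- final algebra
  have heq : 2 * γ / a = 4 * γ * c / (1 - 2 * γ * c) := by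
    have h1 : (0:ℝ) < 1 - 2 * γ * c := by nlinarith
    have ha' : a = (1 - 2 * γ * c) / (2 * c) := by
      rw [ha_def]; field_simp
    rw [ha', div_div_eq_mul_div]
    congr 1
    ring
  calc ∫ ω in {ω | |Z ω| ≤ B}, Real.exp (γ * (Z ω) ^ 2) ∂ μ
      ≤ ∫ ω, Real.exp (γ * W ω) ∂ μ := step1
    _ ≤ 1 + 2 * γ / a := step2
    _ = 1 + 4 * γ * c / (1 - 2 * γ * c) := by rw [heq]
end

section
/- Nonzero eigenvalues of the calibrated two-community SBM matrix. Let n > 2N > 0 be integers, a, c > 0 with (n−N)c ≥ aN, and b = (c(n−N) − aN)/(n−2N) (so b ≥ 0). Let Ω ∈ ℝ^{n×n} be given by Ω_{ij} = a if i,j ∈ C₁, Ω_{ij} = c if i,j ∉ C₁, and Ω_{ij} = b otherwise, where |C₁| = N. Then the nonzero eigenvalues of Ω are exactly those of the 2×2 matrix [[aN, √(N(n−N))·b],[√(N(n−N))·b, (n−N)c]], and these are λ₁ = (c(n−N)² − aN²)/(n−2N) and λ₂ = (a−c)N(n−N)/(n−2N); in particular, Ω has rank at most 2 and eigenvalue 0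 with multiplicity at least n−2. -/
lemma eig2_of (p q r l : ℝ) (h : (l - p) * (l - r) = q ^ 2) :
    IsEigen ![![p, q], ![q, r]] l := by
  by_cases hq : q = 0
  · subst hq
    simp only [pow_two, mul_zero] at h
    rcases mul_eq_zero.mp h with h0 | h0
    · refine ⟨![1, 0], ?_, ?_⟩
      · intro hv; have := congrFun hv 0; simp at this
      · intro i; fin_cases i <;> simp [Fin.sum_univ_two] <;> linarith
    · refine ⟨![0, 1], ?_, ?_⟩
      · intro hv; have := congrFun hv 1; simp at this
      · intro i; fin_cases i <;> simp [Fin.sum_univ_two] <;> linarith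
  · refine ⟨![q, l - p], ?_, ?_⟩
    · intro hv; have := congrFun hv 0; simp at this; exact hq this
    · intro i; fin_cases i <;> simp [Fin.sum_univ_two] <;> nlinarith [h]

lemma eig2_char (p q r x : ℝ) (h : IsEigen ![![p, q], ![q, r]] x) :
    (x - p) * (x - r) = q ^ 2 := by
  obtain ⟨v, hv, he⟩ := h
  have h0 := he 0
  have h1 := he 1
  simp [Fin.sum_univ_two] at h0 h1
  have hvv : v 0 ≠ 0 ∨ v 1 ≠ 0 := by
    by_contra hcon
    push_neg at hcon
    exact hv (funext fun i => by fin_cases i <;> simp [hcon.1, hcon.2])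
  rcases hvv with h2 | h2
  · have key : ((x - p) * (x - r) - q ^ 2) * v 0 = 0 := by
      linear_combination (-(x - r)) * h0 + (-q) * h1
    have := (mul_eq_zero.mp key).resolve_right h2
    linarith
  · have key : ((x - p) * (x - r) - q ^ 2) * v 1 = 0 := by
      linear_combination (-q) * h0 + (-(x - p)) * h1
    have := (mul_eq_zero.mp key).resolve_right h2
    linarith

/-- Nonzero eigenvalues of the calibrated two-community SBM matrix:
they coincide with those of the stated `2×2` matrix and equal
`λ₁ = (c(n-N)² - aN²)/(n-2N)` and `λ₂ = (a-c)N(n-N)/(n-2N)`; in particular `Ω` has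
rank at most `2` and eigenvalue `0` with multiplicity at least `n - 2`. -/
theorem sbm_eigenvalues
    (n N : ℕ) (hN : 0 < N) (h2N : 2 * N < n)
    (a c : ℝ) (ha : 0 < a) (hc : 0 < c)
    (hcal : a * N ≤ c * ((n : ℝ) - N))
    (b : ℝ) (hb : b = (c * ((n : ℝ) - N) - a * N) / ((n : ℝ) - 2 * N))
    (C1 : Finset (Fin n)) (hC1 : C1.card = N)
    (Ω : Fin n → Fin n → ℝ)
    (hΩ : ∀ i j, Ω i j =
      if i ∈ C1 ∧ j ∈ C1 then a else if i ∉ C1 ∧ j ∉ C1 then c else b)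
    (M2 : Fin 2 → Fin 2 → ℝ)
    (hM2 : M2 = ![![a * N, Real.sqrt ((N : ℝ) * ((n : ℝ) - N)) * b],
                  ![Real.sqrt ((N : ℝ) * ((n : ℝ) - N)) * b, c * ((n : ℝ) - N)]])
    (lam₁ lam₂ : ℝ)
    (hlam₁ : lam₁ = (c * ((n : ℝ) - N) ^ 2 - a * (N : ℝ) ^ 2) / ((n : ℝ) - 2 * N))
    (hlam₂ : lam₂ = (a - c) * N * ((n : ℝ) - N) / ((n : ℝ) - 2 * N)) :
    -- the nonzero eigenvalues of `Ω` are exactly those of `M2`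
    (∀ x : ℝ, x ≠ 0 → (IsEigen Ω x ↔ IsEigen M2 x)) ∧
    -- the eigenvalues of `M2` are `λ₁` and `λ₂`
    IsEigen M2 lam₁ ∧ IsEigen M2 lam₂ ∧
    (∀ x : ℝ, IsEigen M2 x → x = lam₁ ∨ x = lam₂) ∧
    -- `Ω` has rank at most `2` and eigenvalue `0` with multiplicity at least `n - 2`
    (Matrix.of Ω).rank ≤ 2 ∧
    n - 2 ≤ Module.finrank ℝ (LinearMap.ker (Matrix.of Ω).mulVecLin) := by
  classical
  have hNn : N < n := by omega
  have hQ : (0:ℝ) < (N:ℝ) := by exact_mod_cast hN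
  have hP : (0:ℝ) < (n:ℝ) - N := by
    have : (N:ℝ) < n := by exact_mod_cast hNn
    linarith
  have hD : (0:ℝ) < (n:ℝ) - 2 * N := by
    have : ((2*N : ℕ):ℝ) < n := by exact_mod_cast h2N
    push_cast at this
    linarith
  set Q : ℝ := (N:ℝ) with hQdef
  set P : ℝ := (n:ℝ) - N with hPdef
  have hsQ : Real.sqrt Q > 0 := Real.sqrt_pos.mpr hQ
  have hsP : Real.sqrt P > 0 := Real.sqrt_pos.mpr hP
  have hsQP : Real.sqrt (Q * P) = Real.sqrt Q * Real.sqrt P := Real.sqrt_mul hQ.le _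
  have hsQQ : Real.sqrt Q * Real.sqrt Q = Q := Real.mul_self_sqrt hQ.le
  have hsPP : Real.sqrt P * Real.sqrt P = P := Real.mul_self_sqrt hP.le
  -- key sum decomposition
  have hmul : ∀ (v : Fin n → ℝ) (i), ∑ j, Ω i j * v j =
      (if i ∈ C1 then a else b) * (∑ j ∈ C1, v j) +
      (if i ∈ C1 then b else c) * (∑ j ∈ C1ᶜ, v j) := by
    intro v i
    rw [← Finset.sum_add_sum_compl C1, Finset.mul_sum, Finset.mul_sum]
    congr 1
    · exact Finset.sum_congr rfl fun j hj => by
        rw [hΩ]; by_cases hi : i ∈ C1 <;> simp [hi, hj]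
    · exact Finset.sum_congr rfl fun j hj => by
        rw [Finset.mem_compl] at hj
        rw [hΩ]; by_cases hi : i ∈ C1 <;> simp [hi, hj]
  have hcard2 : (C1ᶜ : Finset (Fin n)).card = n - N := by
    rw [Finset.card_compl, hC1]; simp
  have hsum1 : ∀ s t : ℝ, (∑ j ∈ C1, (if j ∈ C1 then s else t)) = Q * s := by
    intro s t
    rw [Finset.sum_congr rfl fun j hj => if_pos hj, Finset.sum_const, hC1, nsmul_eq_mul]
  have hsum2 : ∀ s t : ℝ, (∑ j ∈ C1ᶜ, (if j ∈ C1 then s else t)) = P * t := by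
    intro s t
    rw [Finset.sum_congr rfl fun j hj => if_neg (Finset.mem_compl.mp hj),
      Finset.sum_const, hcard2, nsmul_eq_mul]
    push_cast [Nat.cast_sub hNn.le]
    ring
  obtain ⟨i0, hi0⟩ : C1.Nonempty := Finset.card_pos.mp (by omega)
  obtain ⟨i1, hi1'⟩ : (C1ᶜ : Finset (Fin n)).Nonempty := Finset.card_pos.mp (by omega)
  have hi1 : i1 ∉ C1 := Finset.mem_compl.mp hi1'
  -- characteristic identity
  have hq2 : (Real.sqrt (Q * P) * b) ^ 2 = Q * P * b ^ 2 := by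
    rw [mul_pow, Real.sq_sqrt (by positivity)]
  have hsum : lam₁ + lam₂ = a * Q + c * P := by
    rw [hlam₁, hlam₂]
    have hD2 : (n:ℝ) - 2 * (N:ℝ) ≠ 0 := by rw [← hQdef]; exact hD.ne'
    simp only [hPdef, hQdef]
    linear_combination (c * ((n:ℝ) - N) + a * N) * mul_inv_cancel₀ hD2
  have hprod : lam₁ * lam₂ = a * Q * (c * P) - Q * P * b ^ 2 := by
    rw [hlam₁, hlam₂, hb]
    have hD2 : (n:ℝ) - 2 * (N:ℝ) ≠ 0 := by rw [← hQdef]; exact hD.ne'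
    simp only [hPdef, hQdef]
    linear_combination (N:ℝ) * ((n:ℝ) - N) * a * c * (((n:ℝ) - 2 * N) * ((n:ℝ) - 2 * N)⁻¹ + 1) * mul_inv_cancel₀ hD2
  have hchar : ∀ x : ℝ, (x - a * Q) * (x - c * P) - (Real.sqrt (Q * P) * b) ^ 2
      = (x - lam₁) * (x - lam₂) := by
    intro x
    linear_combination x * hsum - hprod - hq2
  -- the M2 eigenvalue statements
  have hM2lam₁ : IsEigen M2 lam₁ := by
    rw [hM2]
    exact eig2_of _ _ _ _ (by linear_combination hchar lam₁)
  have hM2lam₂ : IsEigen M2 lam₂ := by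
    rw [hM2]
    exact eig2_of _ _ _ _ (by linear_combination hchar lam₂)
  have hM2only : ∀ x : ℝ, IsEigen M2 x → x = lam₁ ∨ x = lam₂ := by
    intro x hx
    rw [hM2] at hx
    have h := eig2_char _ _ _ _ hx
    have h2 : (x - lam₁) * (x - lam₂) = 0 := by linear_combination h - hchar x
    rcases mul_eq_zero.mp h2 with h3 | h3
    · left; linarith
    · right; linarith
  -- equivalence of nonzero eigenvalues
  have hequiv : ∀ x : ℝ, x ≠ 0 → (IsEigen Ω x ↔ IsEigen M2 x) := by
    intro x hx
    constructor
    · rintro ⟨v, hv, he⟩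
      set S₁ := ∑ j ∈ C1, v j with hS₁
      set S₂ := ∑ j ∈ C1ᶜ, v j with hS₂
      set s := (a * S₁ + b * S₂) / x with hs
      set t := (b * S₁ + c * S₂) / x with ht
      have hv' : ∀ i, v i = if i ∈ C1 then s else t := by
        intro i
        have h1 := (he i).symm.trans (hmul v i)
        rw [← hS₁, ← hS₂] at h1
        by_cases hi : i ∈ C1
        · simp only [hi, if_pos, if_true] at h1 ⊢
          rw [hs, eq_div_iff hx]
          linarith
        · simp only [hi, if_neg, if_false] at h1 ⊢
          rw [ht, eq_div_iff hx]
          linarith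
      have hS₁' : S₁ = Q * s := by
        rw [hS₁, Finset.sum_congr rfl fun j _ => hv' j, hsum1]
      have hS₂' : S₂ = P * t := by
        rw [hS₂, Finset.sum_congr rfl fun j _ => hv' j, hsum2]
      have eqA : a * (Q * s) + b * (P * t) = x * s := by
        have h1 := (he i0).symm.trans (hmul v i0)
        rw [← hS₁, ← hS₂] at h1
        rw [if_pos hi0, if_pos hi0, hv' i0, if_pos hi0, hS₁', hS₂'] at h1
        linarith
      have eqB : b * (Q * s) + c * (P * t) = x * t := by
        have h1 := (he i1).symm.trans (hmul v i1)
        rw [← hS₁, ← hS₂] at h1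
        rw [if_neg hi1, if_neg hi1, hv' i1, if_neg hi1, hS₁', hS₂'] at h1
        linarith
      have hst : s ≠ 0 ∨ t ≠ 0 := by
        by_contra hcon
        push_neg at hcon
        exact hv (funext fun i => by
          rw [hv' i, hcon.1, hcon.2]; simp)
      refine ⟨![Real.sqrt Q * s, Real.sqrt P * t], ?_, ?_⟩
      · intro hw
        rcases hst with h2 | h2
        · have := congrFun hw 0
          simp at this
          rcases this with h3 | h3
          · exact hsQ.ne' h3
          · exact h2 h3
        · have := congrFun hw 1
          simp at this
          rcases this with h3 | h3
          · exact hsP.ne' h3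
          · exact h2 h3
      · intro i
        rw [hM2]
        fin_cases i <;> simp [Fin.sum_univ_two, hsQP]
        · linear_combination Real.sqrt Q * eqA + (b * Real.sqrt Q * t) * hsPP
        · linear_combination Real.sqrt P * eqB + (b * Real.sqrt P * s) * hsQQ
    · rintro ⟨w, hw, he⟩
      have h0 := he 0
      have h1 := he 1
      rw [hM2] at h0 h1
      simp [Fin.sum_univ_two] at h0 h1
      set s := w 0 / Real.sqrt Q with hs
      set t := w 1 / Real.sqrt P with ht
      have hw0 : w 0 = Real.sqrt Q * s := by
        rw [hs, mul_div_cancel₀ _ hsQ.ne']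
      have hw1 : w 1 = Real.sqrt P * t := by
        rw [ht, mul_div_cancel₀ _ hsP.ne']
      have eqA : a * (Q * s) + b * (P * t) = x * s := by
        have key : Real.sqrt Q * (a * (Q * s) + b * (P * t)) = Real.sqrt Q * (x * s) := by
          rw [hw0, hw1] at h0
          rw [hsQP] at h0
          linear_combination h0 - (b * Real.sqrt Q * t) * hsPP
        exact mul_left_cancel₀ hsQ.ne' key
      have eqB : b * (Q * s) + c * (P * t) = x * t := by
        have key : Real.sqrt P * (b * (Q * s) + c * (P * t)) = Real.sqrt P * (x * t) := by
          rw [hw0, hw1] at h1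
          rw [hsQP] at h1
          linear_combination h1 - (b * Real.sqrt P * s) * hsQQ
        exact mul_left_cancel₀ hsP.ne' key
      have hst : s ≠ 0 ∨ t ≠ 0 := by
        by_contra hcon
        push_neg at hcon
        have hw0' : w 0 = 0 := by rw [hw0, hcon.1, mul_zero]
        have hw1' : w 1 = 0 := by rw [hw1, hcon.2, mul_zero]
        exact hw (funext fun i => by fin_cases i <;> simp [hw0', hw1'])
      refine ⟨fun i => if i ∈ C1 then s else t, ?_, ?_⟩
      · intro hv
        rcases hst with h2 | h2
        · have := congrFun hv i0
          simp [hi0] at this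
          exact h2 this
        · have := congrFun hv i1
          simp [hi1] at this
          exact h2 this
      · intro i
        rw [hmul, hsum1, hsum2]
        by_cases hi : i ∈ C1
        · simp only [hi, if_pos, if_true]
          linarith [eqA]
        · simp only [hi, if_neg, if_false]
          linarith [eqB]
  -- rank bound
  have hrankrange : (Matrix.of Ω).rank =
      Module.finrank ℝ (LinearMap.range (Matrix.of Ω).mulVecLin) := rfl
  set u : Fin n → ℝ := fun i => if i ∈ C1 then 1 else 0 with hu
  set w : Fin n → ℝ := fun i => if i ∈ C1 then 0 else 1 with hwdef
  have hrange : LinearMap.range (Matrix.of Ω).mulVecLin ≤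
      Submodule.span ℝ {u, w} := by
    rintro _ ⟨v, rfl⟩
    have hrep : (Matrix.of Ω).mulVecLin v =
        (a * (∑ j ∈ C1, v j) + b * (∑ j ∈ C1ᶜ, v j)) • u +
        (b * (∑ j ∈ C1, v j) + c * (∑ j ∈ C1ᶜ, v j)) • w := by
      funext i
      have h := hmul v i
      simp only [Matrix.mulVecLin_apply, Matrix.mulVec, dotProduct,
        Matrix.of_apply, Pi.add_apply, Pi.smul_apply, smul_eq_mul]
      rw [h, hu, hwdef]
      by_cases hi : i ∈ C1 <;> simp only [hi, if_true, if_false] <;> ring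
    rw [hrep]
    exact Submodule.add_mem _
      (Submodule.smul_mem _ _ (Submodule.subset_span (by simp)))
      (Submodule.smul_mem _ _ (Submodule.subset_span (by simp)))
  have hspan2 : Module.finrank ℝ (Submodule.span ℝ ({u, w} : Set (Fin n → ℝ))) ≤ 2 := by
    have h1 : ({u, w} : Set (Fin n → ℝ)) = (↑({u, w} : Finset (Fin n → ℝ)) : Set _) := by
      simp
    rw [h1]
    refine le_trans (finrank_span_finset_le_card _) ?_
    refine le_trans (Finset.card_insert_le _ _) ?_
    simp
  have hrank : (Matrix.of Ω).rank ≤ 2 := by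
    rw [hrankrange]
    exact le_trans (Submodule.finrank_mono hrange) hspan2
  have hrn := LinearMap.finrank_range_add_finrank_ker (Matrix.of Ω).mulVecLin
  have hfr : Module.finrank ℝ (Fin n → ℝ) = n := by simp
  rw [hfr] at hrn
  refine ⟨hequiv, hM2lam₁, hM2lam₂, hM2only, hrank, ?_⟩
  rw [hrankrange] at hrank
  omega
end
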